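/- arXiv:1511.08982 — 15 statements merged into one kernel-verified Lean document; each statement's English description precedes it below -/
import Mathlib

section
/- Let X and Y be metric spaces and f : X → Y a map. Suppose that for every ε > 0 there exists a function δ : X → ℝ with δ(x) > 0 for all x, such that for all x, y ∈ X, dist(x,y) < min(δ(x), δ(y)) implies dist(f(x), f(y)) < ε. Then for every ε > 0 there exists a countable family of sets A covering X, each a countable union of discrete subfamilies of closed sets, such that diam(f(A)) < ε for each A in the family. -/
/-!
Take `δ` for `ε / 4` and stratify `X` by `Xₙ = {x | (n+1)⁻¹ ≤ δ x}`: two points of `Xₙ` at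
distance `< (n+1)⁻¹` have images at distance `< ε / 4`. By A. H. Stone's theorem, in M. E. Rudin's
proof (well-order the cover, send each point to the first member containing it, and sort points by
the radius of a ball they have inside that member), the cover of `X` by balls of radius
`(n+1)⁻¹ / 2` has a σ-discrete refinement. Intersecting its members with `Xₙ` and taking closures
keeps every family discrete, and the closure costs only two more `ε / 4`-steps, since each point of
the closure of `Xₙ` is `δ`-close to a point of `Xₙ`.
-/

open Set Metric

/-- A family of subsets of `X` is discrete: every point has a neighborhood
meeting at most one member of the family. -/
def IsDiscreteFamily {X : Type*} [TopologicalSpace X] (𝒜 : Set (Set X)) : Prop :=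
  ∀ x : X, ∃ U ∈ nhds x, {A ∈ 𝒜 | (A ∩ U).Nonempty}.Subsingleton

namespace IsDiscreteFamily

variable {X : Type*} [TopologicalSpace X] {𝒜 : Set (Set X)}

theorem image_of_subset (h𝒜 : IsDiscreteFamily 𝒜) {g : Set X → Set X} (hg : ∀ A, g A ⊆ A) :
    IsDiscreteFamily (g '' 𝒜) := by
  intro x
  obtain ⟨U, hU, hsub⟩ := h𝒜 x
  refine ⟨U, hU, ?_⟩
  rintro _ ⟨⟨A, hA, rfl⟩, hAU⟩ _ ⟨⟨B, hB, rfl⟩, hBU⟩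
  rw [hsub ⟨hA, hAU.mono (inter_subset_inter_left U (hg A))⟩
    ⟨hB, hBU.mono (inter_subset_inter_left U (hg B))⟩]

theorem image_closure (h𝒜 : IsDiscreteFamily 𝒜) : IsDiscreteFamily (closure '' 𝒜) := by
  intro x
  obtain ⟨U, hU, hsub⟩ := h𝒜 x
  refine ⟨interior U, interior_mem_nhds.2 hU, ?_⟩
  have hmeet : ∀ A, (closure A ∩ interior U).Nonempty → (A ∩ U).Nonempty := fun A hA =>
    ((closure_inter_open_nonempty_iff isOpen_interior).1 hA).mono
      (inter_subset_inter_right A interior_subset)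
  rintro _ ⟨⟨A, hA, rfl⟩, hAU⟩ _ ⟨⟨B, hB, rfl⟩, hBU⟩
  rw [hsub ⟨hA, hmeet A hAU⟩ ⟨hB, hmeet B hBU⟩]

end IsDiscreteFamily

section StoneRefinement

variable {X : Type*} [MetricSpace X]

theorem isDiscreteFamily_range_biUnion_ball {ι : Type*} (P : Set X) (s : X → ι) {ρ : ℝ}
    (hρ : 0 < ρ) (hsep : ∀ c ∈ P, ∀ d ∈ P, s c ≠ s d → 3 * ρ ≤ dist c d) :
    IsDiscreteFamily (range fun i => ⋃ c ∈ {c ∈ P | s c = i}, ball c ρ) := by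
  intro x
  refine ⟨ball x (ρ / 2), ball_mem_nhds x (half_pos hρ), ?_⟩
  rintro _ ⟨⟨i, rfl⟩, y, hyi, hyx⟩ _ ⟨⟨j, rfl⟩, z, hzj, hzx⟩
  simp only [mem_iUnion, exists_prop] at hyi hzj
  obtain ⟨c, ⟨hcP, rfl⟩, hyc⟩ := hyi
  obtain ⟨d, ⟨hdP, rfl⟩, hzd⟩ := hzj
  suffices hcd : s c = s d by rw [hcd]
  by_contra hne
  linarith [hsep c hcP d hdP hne, dist_triangle4 c y z d, dist_triangle_right y z x,
    mem_ball'.1 hyc, mem_ball.1 hyx, mem_ball.1 hzx, mem_ball.1 hzd]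

theorem exists_sigmaDiscrete_refinement {ι : Type*} (U : ι → Set X) (hU : ∀ i, IsOpen (U i))
    (hcov : ⋃ i, U i = univ) :
    ∃ D : ℕ → Set (Set X), (∀ m, IsDiscreteFamily (D m)) ∧ ⋃₀ (⋃ m, D m) = univ ∧
      ∀ m, ∀ C ∈ D m, ∃ i, C ⊆ U i := by
  have wf : WellFounded (WellOrderingRel (α := ι)) := IsWellFounded.wf
  have hne : ∀ x, {i | x ∈ U i}.Nonempty := fun x => iUnion_eq_univ_iff.1 hcov x
  let s : X → ι := fun x => wf.min _ (hne x)
  have hs : ∀ x, x ∈ U (s x) := fun x => wf.min_mem _ (hne x)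
  have hrad : ∀ x, ∃ m : ℕ, ball x (3 * (m + 1 : ℝ)⁻¹) ⊆ U (s x) := by
    intro x
    obtain ⟨ε, hε, hball⟩ := Metric.isOpen_iff.1 (hU (s x)) x (hs x)
    obtain ⟨m, hm⟩ := exists_nat_one_div_lt (div_pos hε three_pos)
    refine ⟨m, (ball_subset_ball ?_).trans hball⟩
    rw [one_div] at hm
    linarith
  choose n hn using hrad
  have hfar : ∀ c d, WellOrderingRel (s c) (s d) → 3 * (n c + 1 : ℝ)⁻¹ ≤ dist c d :=
    fun c d hcd => not_lt.1 fun hlt => wf.not_lt_min _ (hn c (mem_ball'.2 hlt)) hcd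
  have hsep : ∀ m, ∀ c ∈ n ⁻¹' {m}, ∀ d ∈ n ⁻¹' {m}, s c ≠ s d →
      3 * (m + 1 : ℝ)⁻¹ ≤ dist c d := by
    rintro m c (rfl : n c = m) d (hd : n d = n c) hne
    rcases trichotomous_of WellOrderingRel (s c) (s d) with hlt | heq | hgt
    · exact hfar c d hlt
    · exact absurd heq hne
    · rw [← hd, dist_comm]
      exact hfar d c hgt
  refine ⟨fun m => range fun i => ⋃ c ∈ {c ∈ n ⁻¹' {m} | s c = i}, ball c (m + 1 : ℝ)⁻¹,
    fun m => isDiscreteFamily_range_biUnion_ball _ s (by positivity) (hsep m), ?_, ?_⟩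
  · refine eq_univ_of_forall fun x => ⟨_, mem_iUnion.2 ⟨n x, s x, rfl⟩, ?_⟩
    exact mem_biUnion ⟨rfl, rfl⟩ (mem_ball_self (by positivity))
  · rintro m _ ⟨i, rfl⟩
    refine ⟨i, iUnion₂_subset fun c hc => ?_⟩
    obtain ⟨rfl : n c = m, rfl⟩ := hc
    have hρ : (0 : ℝ) < (n c + 1 : ℝ)⁻¹ := by positivity
    exact (ball_subset_ball (by linarith)).trans (hn c)

end StoneRefinement

section Oscillation

variable {X Y : Type*} [MetricSpace X] [MetricSpace Y] {f : X → Y} {δ : X → ℝ} {ε η : ℝ}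
  {A : Set X}

theorem exists_mem_dist_image_lt_of_mem_closure (hδpos : ∀ x, 0 < δ x)
    (hδ : ∀ x y, dist x y < min (δ x) (δ y) → dist (f x) (f y) < ε)
    (hA : ∀ x ∈ A, η ≤ δ x) (hη : 0 < η) {y : X} (hy : y ∈ closure A) :
    ∃ x ∈ A, dist (f x) (f y) < ε := by
  obtain ⟨x, hxA, hxy⟩ := Metric.mem_closure_iff.1 hy _ (lt_min hη (hδpos y))
  rw [dist_comm] at hxy
  exact ⟨x, hxA, hδ x y (lt_min ((hxy.trans_le (min_le_left _ _)).trans_le (hA x hxA))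
    (hxy.trans_le (min_le_right _ _)))⟩

theorem ediam_image_closure_le (hδpos : ∀ x, 0 < δ x)
    (hδ : ∀ x y, dist x y < min (δ x) (δ y) → dist (f x) (f y) < ε)
    (hA : ∀ x ∈ A, η ≤ δ x) (hη : 0 < η) (hAη : ∀ x ∈ A, ∀ y ∈ A, dist x y < η) :
    ediam (f '' closure A) ≤ ENNReal.ofReal (3 * ε) := by
  refine ediam_le ?_
  rintro _ ⟨y, hy, rfl⟩ _ ⟨z, hz, rfl⟩
  obtain ⟨x₁, hx₁, h₁⟩ := exists_mem_dist_image_lt_of_mem_closure hδpos hδ hA hη hy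
  obtain ⟨x₂, hx₂, h₂⟩ := exists_mem_dist_image_lt_of_mem_closure hδpos hδ hA hη hz
  have h₁₂ : dist (f x₁) (f x₂) < ε :=
    hδ _ _ ((hAη x₁ hx₁ x₂ hx₂).trans_le (le_min (hA x₁ hx₁) (hA x₂ hx₂)))
  rw [edist_dist]
  refine ENNReal.ofReal_le_ofReal ?_
  linarith [dist_triangle4 (f y) (f x₁) (f x₂) (f z), dist_comm (f y) (f x₁)]

end Oscillation

theorem stmt0 {X Y : Type*} [MetricSpace X] [MetricSpace Y] (f : X → Y)
    (h : ∀ ε > (0 : ℝ), ∃ δ : X → ℝ, (∀ x, δ x > 0) ∧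
      ∀ x y, dist x y < min (δ x) (δ y) → dist (f x) (f y) < ε) :
    ∀ ε > (0 : ℝ), ∃ c : ℕ → Set (Set X),
      (∀ n, IsDiscreteFamily (c n)) ∧
      (∀ n, ∀ A ∈ c n, IsClosed A) ∧
      ⋃₀ (⋃ n, c n) = univ ∧
      ∀ A ∈ ⋃ n, c n, EMetric.diam (f '' A) < ENNReal.ofReal ε := by
  intro ε hε
  obtain ⟨δ, hδpos, hδ⟩ := h (ε / 4) (by positivity)
  choose D hD_disc hD_cov hD_sub using fun n : ℕ =>
    exists_sigmaDiscrete_refinement (fun x : X => ball x ((n + 1 : ℝ)⁻¹ / 2))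
      (fun _ => isOpen_ball) (iUnion_eq_univ_iff.2 fun x => ⟨x, mem_ball_self (by positivity)⟩)
  let F : ℕ × ℕ → Set (Set X) := fun p =>
    closure '' ((· ∩ {x | (p.1 + 1 : ℝ)⁻¹ ≤ δ x}) '' D p.1 p.2)
  have hF : ⋃ k, F (Nat.pairEquiv.symm k) = ⋃ p, F p :=
    Nat.pairEquiv.symm.surjective.iUnion_comp F
  refine ⟨fun k => F (Nat.pairEquiv.symm k),
    fun k => ((hD_disc _ _).image_of_subset fun _ => inter_subset_left).image_closure,
    fun _ => by rintro _ ⟨A, -, rfl⟩; exact isClosed_closure, ?_, ?_⟩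
  · rw [hF]
    refine eq_univ_of_forall fun x => ?_
    obtain ⟨n, hn⟩ := exists_nat_one_div_lt (hδpos x)
    obtain ⟨C, hC, hxC⟩ := (hD_cov n).symm ▸ mem_univ x
    obtain ⟨m, hm⟩ := mem_iUnion.1 hC
    refine ⟨_, mem_iUnion.2 ⟨(n, m), mem_image_of_mem _ (mem_image_of_mem _ hm)⟩,
      subset_closure ⟨hxC, ?_⟩⟩
    rw [one_div] at hn
    exact hn.le
  · rw [hF]
    rintro _ hA
    obtain ⟨⟨n, m⟩, _, ⟨C, hC, rfl⟩, rfl⟩ := mem_iUnion.1 hA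
    obtain ⟨s, hCs⟩ := hD_sub n m C hC
    refine (ediam_image_closure_le hδpos hδ (fun x hx => hx.2) (by positivity)
      fun x hx y hy => ?_).trans_lt ((ENNReal.ofReal_lt_ofReal_iff hε).2 (by linarith))
    linarith [dist_triangle_right x y s, mem_ball.1 (hCs hx.1), mem_ball.1 (hCs hy.1)]
end

section
/- Let X and Y be metric spaces and f : X → Y a map. Suppose that for every ε > 0 there is a σ-discrete cover of X by sets on which f has oscillation less than ε (i.e., a cover which is a countable union of discrete families of sets A with diam(f(A)) < ε). Then f has a σ-discrete base: a family B of subsets of X, equal to a countable union of discrete families, such that the preimage of every open set V ⊆ Y is a union of members of B. -/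
open Set

theorem stmt1 {X Y : Type*} [MetricSpace X] [MetricSpace Y] (f : X → Y)
    (h : ∀ ε > (0 : ℝ), ∃ c : ℕ → Set (Set X),
      (∀ n, IsDiscreteFamily (c n)) ∧
      ⋃₀ (⋃ n, c n) = univ ∧
      ∀ A ∈ ⋃ n, c n, EMetric.diam (f '' A) < ENNReal.ofReal ε) :
    ∃ b : ℕ → Set (Set X), (∀ n, IsDiscreteFamily (b n)) ∧
      ∀ V : Set Y, IsOpen V → ∃ S ⊆ ⋃ n, b n, f ⁻¹' V = ⋃₀ S := by
  have hpos : ∀ k : ℕ, (0 : ℝ) < 1 / (k + 1) := fun k => by positivity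
  choose c hdisc hcov hdiam using fun k : ℕ => h (1 / ((k : ℝ) + 1)) (hpos k)
  refine ⟨fun m => c m.unpair.1 m.unpair.2, fun m => hdisc _ _, fun V hV => ?_⟩
  refine ⟨{A | (A ∈ ⋃ m : ℕ, c m.unpair.1 m.unpair.2) ∧ f '' A ⊆ V}, fun A hA => hA.1, ?_⟩
  ext x
  simp only [mem_preimage, mem_sUnion, mem_setOf_eq]
  constructor
  · intro hx
    rcases Metric.isOpen_iff.mp hV _ hx with ⟨ε, hε, hball⟩
    rcases exists_nat_one_div_lt hε with ⟨k, hk⟩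
    have : x ∈ ⋃₀ (⋃ n, c k n) := by rw [hcov k]; trivial
    rcases this with ⟨A, hAmem, hxA⟩
    rcases mem_iUnion.mp hAmem with ⟨n, hAn⟩
    refine ⟨A, ⟨mem_iUnion.mpr ⟨Nat.pair k n, by simp [Nat.unpair_pair, hAn]⟩, ?_⟩, hxA⟩
    intro y hy
    apply hball
    have h1 : edist y (f x) ≤ EMetric.diam (f '' A) :=
      EMetric.edist_le_diam_of_mem hy (mem_image_of_mem f hxA)
    have h2 : edist y (f x) < ENNReal.ofReal (1 / ((k : ℝ) + 1)) :=
      lt_of_le_of_lt h1 (hdiam k A hAmem)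
    have h3 : dist y (f x) < 1 / ((k : ℝ) + 1) := by
      rwa [edist_dist, ENNReal.ofReal_lt_ofReal_iff (hpos k)] at h2
    exact Metric.mem_ball.mpr (h3.trans hk)
  · rintro ⟨A, ⟨_, hAV⟩, hxA⟩
    exact hAV (mem_image_of_mem f hxA)
end

section
/- Let X be a metric space and let A be a cover of X which is a countable union of discrete families of closed sets. Then there exists a function δ : X → ℝ with δ(x) > 0 for all x, such that for all x, y ∈ X, if dist(x,y) < min(δ(x), δ(y)) then there exists A ∈ 𝒜 with x ∈ A and y ∈ A. -/
open Set

theorem stmt2 {X : Type*} [MetricSpace X] (𝒜 : Set (Set X)) (c : ℕ → Set (Set X))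
    (h𝒜 : 𝒜 = ⋃ n, c n) (hdisc : ∀ n, IsDiscreteFamily (c n))
    (hclosed : ∀ A ∈ 𝒜, IsClosed A) (hcov : ⋃₀ 𝒜 = univ) :
    ∃ δ : X → ℝ, (∀ x, δ x > 0) ∧
      ∀ x y, dist x y < min (δ x) (δ y) → ∃ A ∈ 𝒜, x ∈ A ∧ y ∈ A := by
  classical
  have hex : ∀ x : X, ∃ n, ∃ A ∈ c n, x ∈ A := by
    intro x
    have hx : x ∈ ⋃₀ 𝒜 := by rw [hcov]; trivial
    obtain ⟨A, hA, hxA⟩ := hx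
    rw [h𝒜] at hA
    obtain ⟨n, hn⟩ := mem_iUnion.1 hA
    exact ⟨n, A, hn, hxA⟩
  set n : X → ℕ := fun x => Nat.find (hex x) with hn_def
  have hn_spec : ∀ x, ∃ A ∈ c (n x), x ∈ A := fun x => Nat.find_spec (hex x)
  have hn_min : ∀ x m, m < n x → ∀ A ∈ c m, x ∉ A := by
    intro x m hm A hA hxA
    exact Nat.find_min (hex x) hm ⟨A, hA, hxA⟩
  choose A hAc hxA using hn_spec
  have hρ : ∀ x m, ∃ r > (0:ℝ),
      (m < n x → ∀ B ∈ c m, Disjoint (Metric.ball x r) B) ∧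
      (m = n x → ∀ B ∈ c m, (B ∩ Metric.ball x r).Nonempty → B = A x) := by
    intro x m
    obtain ⟨U, hU, hsub⟩ := hdisc m x
    obtain ⟨r, hr, hball⟩ := Metric.mem_nhds_iff.1 hU
    by_cases hlt : m < n x
    · by_cases hB : ∃ B ∈ c m, (B ∩ U).Nonempty
      · obtain ⟨B, hBc, hBU⟩ := hB
        have hxB : x ∉ B := hn_min x m hlt B hBc
        have hBop : IsOpen Bᶜ :=
          (hclosed B (by rw [h𝒜]; exact mem_iUnion.2 ⟨m, hBc⟩)).isOpen_compl
        obtain ⟨r', hr', hball'⟩ := Metric.isOpen_iff.1 hBop x hxB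
        refine ⟨min r r', lt_min hr hr', fun _ B' hB'c => ?_,
          fun h => absurd h hlt.ne⟩
        by_cases hB'U : (B' ∩ U).Nonempty
        · have hBB : B' = B := hsub ⟨hB'c, hB'U⟩ ⟨hBc, hBU⟩
          refine Set.disjoint_left.2 fun z hz hzB => ?_
          exact hball' (Metric.ball_subset_ball (min_le_right r r') hz) (hBB ▸ hzB)
        · refine Set.disjoint_left.2 fun z hz hzB => ?_
          exact hB'U ⟨z, hzB, hball (Metric.ball_subset_ball (min_le_left r r') hz)⟩
      · refine ⟨r, hr, fun _ B' hB'c => ?_, fun h => absurd h hlt.ne⟩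
        refine Set.disjoint_left.2 fun z hz hzB => ?_
        exact hB ⟨B', hB'c, z, hzB, hball hz⟩
    · by_cases heq : m = n x
      · refine ⟨r, hr, fun h => absurd h hlt, fun _ B hBc hBne => ?_⟩
        obtain ⟨z, hzB, hzball⟩ := hBne
        have hAx : A x ∈ c m := heq ▸ hAc x
        have hxU : x ∈ U := hball (Metric.mem_ball_self hr)
        exact hsub ⟨hBc, ⟨z, hzB, hball hzball⟩⟩ ⟨hAx, ⟨x, hxA x, hxU⟩⟩
      · exact ⟨1, one_pos, fun h => absurd h hlt, fun h => absurd h heq⟩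
  choose ρ hρpos hρ1 hρ2 using fun x => hρ x
  set δ : X → ℝ := fun x => (Finset.range (n x + 1)).inf' ⟨0, by simp⟩ (ρ x) with hδ
  have hδpos : ∀ x, 0 < δ x := by
    intro x
    rw [hδ]
    exact (Finset.lt_inf'_iff _).2 fun m _ => hρpos x m
  have hδle : ∀ x m, m ≤ n x → δ x ≤ ρ x m := by
    intro x m hm
    exact Finset.inf'_le _ (Finset.mem_range.2 (Nat.lt_succ_of_le hm))
  have key : ∀ x y : X, dist x y < δ x → dist x y < δ y → n x ≤ n y →
      ∃ A ∈ 𝒜, x ∈ A ∧ y ∈ A := by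
    intro x y hdx hdy hle
    have heq : n x = n y := by
      by_contra hne
      have hlt : n x < n y := lt_of_le_of_ne hle hne
      have hdisj := hρ1 y (n x) hlt (A x) (hAc x)
      have hxball : x ∈ Metric.ball y (ρ y (n x)) :=
        Metric.mem_ball.2 (lt_of_lt_of_le hdy (hδle y (n x) hlt.le))
      exact Set.disjoint_left.1 hdisj hxball (hxA x)
    have hyball : y ∈ Metric.ball x (ρ x (n x)) := by
      rw [Metric.mem_ball, dist_comm]
      exact lt_of_lt_of_le hdx (hδle x (n x) le_rfl)
    have hAy : A y ∈ c (n x) := heq ▸ hAc y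
    have hEq : A y = A x := hρ2 x (n x) rfl (A y) hAy ⟨y, hxA y, hyball⟩
    exact ⟨A x, by rw [h𝒜]; exact mem_iUnion.2 ⟨n x, hAc x⟩, hxA x, hEq ▸ hxA y⟩
  refine ⟨δ, hδpos, fun x y hxy => ?_⟩
  have hdx : dist x y < δ x := lt_of_lt_of_le hxy (min_le_left _ _)
  have hdy : dist x y < δ y := lt_of_lt_of_le hxy (min_le_right _ _)
  rcases le_total (n x) (n y) with h | h
  · exact key x y hdx hdy h
  · obtain ⟨B, hB, hyB, hxB⟩ := key y x (by rwa [dist_comm]) (by rwa [dist_comm]) h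
    exact ⟨B, hB, hxB, hyB⟩
end

section
/- Let X be a topological space and 𝒜 a cover of X which is a countable union of discrete families of closed sets, where moreover each family is strongly discrete (each member contained in an open set from a discrete open family). Then there exists a neighborhood assignment U : X → (open sets of X) with x ∈ U(x) for all x, such that whenever x, y ∈ U(x) ∩ U(y), there exists A ∈ 𝒜 containing both x and y. -/
open Set

/-- A family is strongly discrete: there is a discrete family of open sets `u A`
with `closure A ⊆ u A` for each member `A`. -/
def IsStronglyDiscreteFamily {X : Type*} [TopologicalSpace X] (𝒜 : Set (Set X)) : Prop :=
  ∃ u : Set X → Set X, (∀ A ∈ 𝒜, IsOpen (u A) ∧ closure A ⊆ u A) ∧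
    ∀ x : X, ∃ V ∈ nhds x, {A ∈ 𝒜 | (u A ∩ V).Nonempty}.Subsingleton

lemma isClosed_sUnion_of_discrete {X : Type*} [TopologicalSpace X] {𝒞 : Set (Set X)}
    (hd : IsDiscreteFamily 𝒞) (hc : ∀ A ∈ 𝒞, IsClosed A) : IsClosed (⋃₀ 𝒞) := by
  rw [← closure_eq_iff_isClosed]
  refine Subset.antisymm ?_ subset_closure
  intro x hx
  obtain ⟨U, hU, hsub⟩ := hd x
  by_cases h : ∃ A₀ ∈ 𝒞, (A₀ ∩ U).Nonempty
  · obtain ⟨A₀, hA₀, hne⟩ := h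
    have hxA : x ∈ closure A₀ := by
      rw [mem_closure_iff_nhds]
      intro N hN
      rw [mem_closure_iff_nhds] at hx
      obtain ⟨z, hz1, hz2⟩ := hx (N ∩ U) (Filter.inter_mem hN hU)
      obtain ⟨B, hB, hzB⟩ := hz2
      have : B = A₀ := hsub ⟨hB, ⟨z, hzB, hz1.2⟩⟩ ⟨hA₀, hne⟩
      exact ⟨z, hz1.1, this ▸ hzB⟩
    rw [(hc A₀ hA₀).closure_eq] at hxA
    exact ⟨A₀, hA₀, hxA⟩
  · exfalso
    rw [mem_closure_iff_nhds] at hx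
    obtain ⟨z, hzU, B, hB, hzB⟩ := hx U hU
    exact h ⟨B, hB, z, hzB, hzU⟩

theorem stmt3 {X : Type*} [TopologicalSpace X] (𝒜 : Set (Set X)) (c : ℕ → Set (Set X))
    (h𝒜 : 𝒜 = ⋃ n, c n)
    (hdisc : ∀ n, IsDiscreteFamily (c n) ∧ IsStronglyDiscreteFamily (c n))
    (hclosed : ∀ A ∈ 𝒜, IsClosed A) (hcov : ⋃₀ 𝒜 = univ) :
    ∃ U : X → Set X, (∀ x, IsOpen (U x) ∧ x ∈ U x) ∧
      ∀ x y, x ∈ U x ∩ U y → y ∈ U x ∩ U y → ∃ A ∈ 𝒜, x ∈ A ∧ y ∈ A := by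
  classical
  -- pieces of strong discreteness at each level
  choose u hu hV using fun n => (hdisc n).2
  -- every point belongs to some member at some level
  have hex : ∀ x : X, ∃ n, ∃ A ∈ c n, x ∈ A := by
    intro x
    have : x ∈ ⋃₀ 𝒜 := hcov ▸ mem_univ x
    obtain ⟨A, hA, hxA⟩ := this
    rw [h𝒜] at hA
    obtain ⟨n, hn⟩ := mem_iUnion.mp hA
    exact ⟨n, A, hn, hxA⟩
  -- least level
  set n : X → ℕ := fun x => Nat.find (hex x) with hn
  have hnspec : ∀ x, ∃ A ∈ c (n x), x ∈ A := fun x => Nat.find_spec (hex x)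
  have hnmin : ∀ x, ∀ m < n x, ¬∃ A ∈ c m, x ∈ A := fun x m hm => Nat.find_min (hex x) hm
  choose A hAc hxA using hnspec
  -- strong discreteness neighborhood at level n x
  have hVx : ∀ x, ∃ V, IsOpen V ∧ x ∈ V ∧ {B ∈ c (n x) | (u (n x) B ∩ V).Nonempty}.Subsingleton := by
    intro x
    obtain ⟨V, hVmem, hVsub⟩ := hV (n x) x
    obtain ⟨W, hWV, hWopen, hxW⟩ := mem_nhds_iff.mp hVmem
    exact ⟨W, hWopen, hxW, fun B hB B' hB' =>
      hVsub ⟨hB.1, hB.2.mono (inter_subset_inter_right _ hWV)⟩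
        ⟨hB'.1, hB'.2.mono (inter_subset_inter_right _ hWV)⟩⟩
  choose V hVopen hxV hVsub using hVx
  -- closedness of lower-level unions
  have hclosedU : ∀ m, IsClosed (⋃₀ c m) := by
    intro m
    refine isClosed_sUnion_of_discrete (hdisc m).1 (fun B hB => hclosed B ?_)
    rw [h𝒜]; exact mem_iUnion.mpr ⟨m, hB⟩
  -- definition of U
  refine ⟨fun x => V x ∩ u (n x) (A x) ∩ ⋂ m ∈ Finset.range (n x), (⋃₀ c m)ᶜ, ?_, ?_⟩
  · intro x
    have hAmem : A x ∈ c (n x) := hAc x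
    have huA := hu (n x) (A x) hAmem
    constructor
    · exact (((hVopen x).inter huA.1).inter
        (isOpen_biInter_finset (fun m _ => (hclosedU m).isOpen_compl)))
    · refine ⟨⟨hxV x, huA.2 (subset_closure (hxA x))⟩, ?_⟩
      simp only [mem_iInter, Finset.mem_range]
      intro m hm
      exact fun ⟨B, hB, hxB⟩ => hnmin x m hm ⟨B, hB, hxB⟩
  · intro x y hx hy
    -- x ∈ U y gives n y ≤ n x
    have key : ∀ a b : X, (a : X) ∈ V b ∩ u (n b) (A b) ∩
        ⋂ m ∈ Finset.range (n b), (⋃₀ c m)ᶜ → n b ≤ n a := by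
      intro a b hab
      by_contra hlt
      push_neg at hlt
      have := hab.2
      simp only [mem_iInter, Finset.mem_range] at this
      exact this (n a) hlt ⟨A a, hAc a, hxA a⟩
    have h1 : n y ≤ n x := key x y hx.2
    have h2 : n x ≤ n y := key y x hy.1
    have heq : n x = n y := le_antisymm h2 h1
    -- y ∈ V x, y ∈ u (n y) (A y), x ∈ u (n x) (A x), x ∈ V x
    have hyVx : y ∈ V x := hy.1.1.1
    have hAxcap : (u (n x) (A x) ∩ V x).Nonempty :=
      ⟨x, hx.1.1.2, hxV x⟩
    have hAycap : (u (n x) (A y) ∩ V x).Nonempty := by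
      refine ⟨y, ?_, hyVx⟩
      have := (hu (n y) (A y) (hAc y)).2 (subset_closure (hxA y))
      rwa [heq]
    have hAyc : A y ∈ c (n x) := heq ▸ hAc y
    have : A x = A y := hVsub x ⟨hAc x, hAxcap⟩ ⟨hAyc, hAycap⟩
    refine ⟨A x, ?_, hxA x, this ▸ hxA y⟩
    rw [h𝒜]; exact mem_iUnion.mpr ⟨n x, hAc x⟩
end

section
/- Let X be a topological space, Y a metric space, and f : X → Y a map admitting, for every ε > 0, a σ-strongly-discrete cover of X by closed sets on each of which f has oscillation less than ε. Then for every ε > 0 there exists a neighborhood assignment U : X → (open sets of X) with x ∈ U(x), such that x, y ∈ U(x) ∩ U(y) implies dist(f(x), f(y)) < ε. -/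
open Set

lemma isClosed_sUnion_of_stronglyDiscrete {X : Type*} [TopologicalSpace X] {𝒜 : Set (Set X)}
    (hd : IsStronglyDiscreteFamily 𝒜) (hc : ∀ A ∈ 𝒜, IsClosed A) :
    IsClosed (⋃₀ 𝒜) := by
  rw [← isOpen_compl_iff, isOpen_iff_mem_nhds]
  intro x hx
  obtain ⟨u, hu, hV⟩ := hd
  obtain ⟨V, hVn, hVs⟩ := hV x
  by_cases hS : ∃ A₀, A₀ ∈ 𝒜 ∧ (u A₀ ∩ V).Nonempty
  · obtain ⟨A₀, hA₀, hne⟩ := hS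
    have hxA₀ : x ∈ A₀ᶜ := fun hxA => hx ⟨A₀, hA₀, hxA⟩
    filter_upwards [hVn, (hc A₀ hA₀).isOpen_compl.mem_nhds hxA₀] with z hzV hzA₀
    rintro ⟨A, hA, hzA⟩
    have h1 : A ∈ {A ∈ 𝒜 | (u A ∩ V).Nonempty} :=
      ⟨hA, ⟨z, (hu A hA).2 (subset_closure hzA), hzV⟩⟩
    have h2 : A₀ ∈ {A ∈ 𝒜 | (u A ∩ V).Nonempty} := ⟨hA₀, hne⟩
    exact hzA₀ (hVs h1 h2 ▸ hzA)
  · filter_upwards [hVn] with z hzV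
    rintro ⟨A, hA, hzA⟩
    exact hS ⟨A, hA, ⟨z, (hu A hA).2 (subset_closure hzA), hzV⟩⟩

theorem stmt4 {X Y : Type*} [TopologicalSpace X] [MetricSpace Y] (f : X → Y)
    (h : ∀ ε > (0 : ℝ), ∃ c : ℕ → Set (Set X),
      (∀ n, IsStronglyDiscreteFamily (c n)) ∧
      (∀ n, ∀ A ∈ c n, IsClosed A) ∧
      ⋃₀ (⋃ n, c n) = univ ∧
      ∀ A ∈ ⋃ n, c n, EMetric.diam (f '' A) < ENNReal.ofReal ε) :
    ∀ ε > (0 : ℝ), ∃ U : X → Set X, (∀ x, IsOpen (U x) ∧ x ∈ U x) ∧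
      ∀ x y, x ∈ U x ∩ U y → y ∈ U x ∩ U y → dist (f x) (f y) < ε := by
  classical
  intro ε hε
  obtain ⟨c, hdisc, hclosed, hcov, hdiam⟩ := h ε hε
  choose u hu hVex using hdisc
  choose V hVn hVs using hVex
  have hex : ∀ x : X, ∃ n, x ∈ ⋃₀ c n := by
    intro x
    have hx : x ∈ ⋃₀ (⋃ n, c n) := hcov ▸ mem_univ x
    obtain ⟨A, hA, hxA⟩ := hx
    obtain ⟨n, hn⟩ := mem_iUnion.1 hA
    exact ⟨n, A, hn, hxA⟩
  set nx : X → ℕ := fun x => Nat.find (hex x) with hnx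
  have hAex : ∀ x, ∃ A, A ∈ c (nx x) ∧ x ∈ A := fun x => Nat.find_spec (hex x)
  choose A hAc hAx using hAex
  -- closedness of each level's union
  have hlev : ∀ m, IsClosed (⋃₀ c m) := fun m =>
    isClosed_sUnion_of_stronglyDiscrete ⟨u m, hu m, fun x => ⟨V m x, hVn m x, hVs m x⟩⟩
      (hclosed m)
  refine ⟨fun x => u (nx x) (A x) ∩ interior (V (nx x) x) ∩
      ⋂ m ∈ Finset.range (nx x), (⋃₀ c m)ᶜ, ?_, ?_⟩
  · intro x
    refine ⟨((hu _ _ (hAc x)).1.inter isOpen_interior).inter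
      (isOpen_biInter_finset fun m _ => (hlev m).isOpen_compl), ?_, ?_⟩
    · exact ⟨(hu _ _ (hAc x)).2 (subset_closure (hAx x)),
        mem_interior_iff_mem_nhds.2 (hVn _ x)⟩
    · simp only [mem_iInter, Finset.mem_range, mem_compl_iff]
      intro m hm
      exact Nat.find_min (hex x) hm
  · intro x y hx hy
    obtain ⟨-, hxUy⟩ := hx
    obtain ⟨hyUx, -⟩ := hy
    -- levels are equal
    have hxlev : x ∈ ⋃₀ c (nx x) := ⟨A x, hAc x, hAx x⟩
    have hylev : y ∈ ⋃₀ c (nx y) := ⟨A y, hAc y, hAx y⟩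
    have hle1 : nx y ≤ nx x := by
      by_contra hlt
      have := hxUy.2
      simp only [mem_iInter, Finset.mem_range, mem_compl_iff] at this
      exact this _ (lt_of_not_ge hlt) hxlev
    have hle2 : nx x ≤ nx y := by
      by_contra hlt
      have := hyUx.2
      simp only [mem_iInter, Finset.mem_range, mem_compl_iff] at this
      exact this _ (lt_of_not_ge hlt) hylev
    have hnn : nx x = nx y := le_antisymm hle2 hle1
    -- A x = A y via discreteness at y
    have hAy_mem : A y ∈ {B ∈ c (nx y) | (u (nx y) B ∩ V (nx y) y).Nonempty} :=
      ⟨hAc y, ⟨y, (hu _ _ (hAc y)).2 (subset_closure (hAx y)),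
        mem_of_mem_nhds (hVn _ y)⟩⟩
    have hAx_mem : A x ∈ {B ∈ c (nx y) | (u (nx y) B ∩ V (nx y) y).Nonempty} := by
      refine ⟨hnn ▸ hAc x, ⟨x, ?_, interior_subset hxUy.1.2⟩⟩
      exact hnn ▸ (hu _ _ (hAc x)).2 (subset_closure (hAx x))
    have hAA : A x = A y := hVs (nx y) y hAx_mem hAy_mem
    -- conclude from diameter bound
    have hyA : y ∈ A x := hAA ▸ hAx y
    have hd := hdiam (A x) (mem_iUnion.2 ⟨nx x, hAc x⟩)
    have hedist : edist (f x) (f y) < ENNReal.ofReal ε :=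
      lt_of_le_of_lt (EMetric.edist_le_diam_of_mem (mem_image_of_mem f (hAx x))
        (mem_image_of_mem f hyA)) hd
    rw [edist_dist, ENNReal.ofReal_lt_ofReal_iff hε] at hedist
    exact hedist
end

section
/- Let X be a hereditarily Baire metric space, Y a metric space, and f : X → Y a map such that the preimage of every open set in Y is an Fσ subset of X. Then f is barely continuous: for every nonempty closed set F ⊆ X, the restriction of f to F has a point of continuity. -/
open Set

/-- A set is Fσ: a countable union of closed sets. -/
def IsFsigma {X : Type*} [TopologicalSpace X] (s : Set X) : Prop :=
  ∃ F : ℕ → Set X, (∀ n, IsClosed (F n)) ∧ s = ⋃ n, F n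

lemma baire_cover {X : Type*} [TopologicalSpace X] {L : Set X} {ι : Sort*} [Countable ι]
    (hB : BaireSpace L) (hne : L.Nonempty) (T : ι → Set X) (hT : ∀ n, IsClosed (T n))
    (hcov : L ⊆ ⋃ n, T n) :
    ∃ n U, IsOpen U ∧ (U ∩ L).Nonempty ∧ U ∩ L ⊆ T n := by
  haveI := hB
  haveI : Nonempty L := hne.to_subtype
  have hclosed : ∀ n, IsClosed ((Subtype.val : L → X) ⁻¹' T n) :=
    fun n => (hT n).preimage continuous_subtype_val
  have huniv : ⋃ n, (Subtype.val : L → X) ⁻¹' T n = univ := by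
    ext x
    simp only [mem_iUnion, mem_univ, iff_true, mem_preimage]
    exact mem_iUnion.1 (hcov x.2)
  obtain ⟨n, x, hx⟩ := nonempty_interior_of_iUnion_of_closed hclosed huniv
  obtain ⟨V, hVsub, hVopen, hxV⟩ := mem_interior.1 hx
  obtain ⟨U, hUopen, hUV⟩ := isOpen_induced_iff.1 hVopen
  refine ⟨n, U, hUopen, ⟨x.1, ?_, x.2⟩, ?_⟩
  · rw [← hUV] at hxV; exact hxV
  · rintro y ⟨hyU, hyL⟩
    have : (⟨y, hyL⟩ : L) ∈ V := by rw [← hUV]; exact hyU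
    exact hVsub this

theorem stmt5 {X Y : Type*} [MetricSpace X] [MetricSpace Y]
    (hered : ∀ F : Set X, IsClosed F → BaireSpace F) (f : X → Y)
    (hf : ∀ V : Set Y, IsOpen V → IsFsigma (f ⁻¹' V)) :
    ∀ F : Set X, IsClosed F → F.Nonempty → ∃ x ∈ F, ContinuousWithinAt f F x := by
  intro F hFc hFne
  by_contra hcon
  push_neg at hcon
  -- oscillation sets
  set A : ℕ → Set X := fun n => {x | x ∈ F ∧ ∀ δ : ℝ, 0 < δ → ∃ u ∈ F, ∃ v ∈ F,
      dist u x < δ ∧ dist v x < δ ∧ 1/((n:ℝ)+1) ≤ dist (f u) (f v)} with hAdef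
  have hAF : ∀ n, A n ⊆ F := fun n x hx => hx.1
  have hAc : ∀ n, IsClosed (A n) := by
    intro n
    apply isClosed_of_closure_subset
    intro x hx
    have hxF : x ∈ F := hFc.closure_subset (closure_mono (hAF n) hx)
    refine ⟨hxF, fun δ hδ => ?_⟩
    obtain ⟨x', hx', hdx⟩ := Metric.mem_closure_iff.1 hx (δ/2) (by linarith)
    obtain ⟨u, huF, v, hvF, hu, hv, hd⟩ := hx'.2 (δ/2) (by linarith)
    have h1 : dist u x < δ := by
      have := dist_triangle u x' x
      have h2 : dist x' x = dist x x' := dist_comm _ _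
      linarith
    have h2 : dist v x < δ := by
      have := dist_triangle v x' x
      have h2 : dist x' x = dist x x' := dist_comm _ _
      linarith
    exact ⟨u, huF, v, hvF, h1, h2, hd⟩
  have hcov : F ⊆ ⋃ n, A n := by
    intro x hxF
    have hnc := hcon x hxF
    rw [Metric.continuousWithinAt_iff] at hnc
    push_neg at hnc
    obtain ⟨ε₀, hε₀, hx⟩ := hnc
    obtain ⟨n, hn⟩ := exists_nat_one_div_lt hε₀
    refine mem_iUnion.2 ⟨n, hxF, fun δ hδ => ?_⟩
    obtain ⟨y, hyF, hyd, hyval⟩ := hx δ hδ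
    exact ⟨y, hyF, x, hxF, hyd, by simpa using hδ, le_trans hn.le hyval⟩
  obtain ⟨n, W, hWopen, hWne, hWsub⟩ := baire_cover (hered F hFc) hFne A hAc hcov
  set ε : ℝ := 1/((n:ℝ)+1) with hεdef
  have hε : 0 < ε := by positivity
  set K := closure (W ∩ F) with hKdef
  have hKc : IsClosed K := isClosed_closure
  have hQ : ∀ x ∈ K, ∀ O : Set X, IsOpen O → x ∈ O →
      ∃ u ∈ O ∩ K, ∃ v ∈ O ∩ K, ε ≤ dist (f u) (f v) := by
    intro x hx O hO hxO
    obtain ⟨r, hr, hball⟩ := Metric.isOpen_iff.1 hO x hxO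
    obtain ⟨s, hsWF, hds⟩ := Metric.mem_closure_iff.1 hx r hr
    have hsO : s ∈ O := hball (by rw [Metric.mem_ball, dist_comm]; exact hds)
    obtain ⟨δ, hδ, hball2⟩ := Metric.isOpen_iff.1 (hO.inter hWopen) s ⟨hsO, hsWF.1⟩
    obtain ⟨u, huF, v, hvF, hu, hv, hd⟩ := (hWsub hsWF).2 δ hδ
    have huOW : u ∈ O ∩ W := hball2 (Metric.mem_ball.2 hu)
    have hvOW : v ∈ O ∩ W := hball2 (Metric.mem_ball.2 hv)
    exact ⟨u, ⟨huOW.1, subset_closure ⟨huOW.2, huF⟩⟩,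
           v, ⟨hvOW.1, subset_closure ⟨hvOW.2, hvF⟩⟩, hd⟩
  obtain ⟨x₁, hx₁⟩ := hWne
  have hx₁K : x₁ ∈ K := subset_closure hx₁
  -- witness choice function
  have hwit : ∀ (x : X) (q : ℚ), ∃ p : X × X, p.1 ∈ K ∧ p.2 ∈ K ∧
      (x ∈ K → 0 < q → p.1 ∈ Metric.ball x (q:ℝ) ∧ p.2 ∈ Metric.ball x (q:ℝ) ∧
        ε ≤ dist (f p.1) (f p.2)) := by
    intro x q
    by_cases h : x ∈ K ∧ 0 < q
    · obtain ⟨u, ⟨huO, huK⟩, v, ⟨hvO, hvK⟩, hd⟩ := hQ x h.1 (Metric.ball x (q:ℝ))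
        Metric.isOpen_ball (Metric.mem_ball_self (by exact_mod_cast h.2))
      exact ⟨(u, v), huK, hvK, fun _ _ => ⟨huO, hvO, hd⟩⟩
    · exact ⟨(x₁, x₁), hx₁K, hx₁K, fun h1 h2 => absurd ⟨h1, h2⟩ h⟩
  choose g hg1 hg2 hg3 using hwit
  -- countable set closed under witnesses
  let S : ℕ → Set X := fun j => Nat.rec ({x₁} : Set X)
    (fun _ Sp => Sp ∪ ⋃ x ∈ Sp, ⋃ q : ℚ, {(g x q).1, (g x q).2}) j
  have hSsucc : ∀ j, S (j+1) = S j ∪ ⋃ x ∈ S j, ⋃ q : ℚ, {(g x q).1, (g x q).2} :=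
    fun j => rfl
  have hScnt : ∀ j, (S j).Countable := by
    intro j
    induction j with
    | zero => exact countable_singleton _
    | succ j ih =>
      rw [hSsucc]
      exact ih.union (ih.biUnion (fun x _ => countable_iUnion
        (fun q => (countable_singleton _).insert _)))
  set Sω := ⋃ j, S j with hSωdef
  have hSωc : Sω.Countable := countable_iUnion hScnt
  have hSωK : Sω ⊆ K := by
    apply iUnion_subset
    intro j
    induction j with
    | zero =>
      intro x hx
      have hx' : x = x₁ := hx
      rw [hx']; exact hx₁K
    | succ j ih =>
      rw [hSsucc]
      rintro x (hx | hx)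
      · exact ih hx
      · simp only [mem_iUnion, mem_insert_iff, mem_singleton_iff] at hx
        obtain ⟨y, hy, q, hq⟩ := hx
        rcases hq with h | h
        · rw [h]; exact hg1 y q
        · rw [h]; exact hg2 y q
  have hx₁Sω : x₁ ∈ Sω := mem_iUnion.2 ⟨0, rfl⟩
  have hSωne : Sω.Nonempty := ⟨x₁, hx₁Sω⟩
  have hwitS : ∀ x ∈ Sω, ∀ q : ℚ, (g x q).1 ∈ Sω ∧ (g x q).2 ∈ Sω := by
    intro x hx q
    obtain ⟨j, hj⟩ := mem_iUnion.1 hx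
    constructor <;>
    · refine mem_iUnion.2 ⟨j+1, ?_⟩
      rw [hSsucc]
      refine Or.inr ?_
      simp only [mem_iUnion, mem_insert_iff, mem_singleton_iff]
      exact ⟨x, hj, q, by tauto⟩
  set L := closure Sω with hLdef
  have hLc : IsClosed L := isClosed_closure
  have hLne : L.Nonempty := ⟨x₁, subset_closure hx₁Sω⟩
  -- oscillation property on L
  have hQL : ∀ z ∈ L, ∀ O : Set X, IsOpen O → z ∈ O →
      ∃ u ∈ O ∩ L, ∃ v ∈ O ∩ L, ε ≤ dist (f u) (f v) := by
    intro z hz O hO hzO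
    obtain ⟨r, hr, hball⟩ := Metric.isOpen_iff.1 hO z hzO
    obtain ⟨s, hsS, hds⟩ := Metric.mem_closure_iff.1 hz r hr
    have hsO : s ∈ O := hball (by rw [Metric.mem_ball, dist_comm]; exact hds)
    obtain ⟨r', hr', hball'⟩ := Metric.isOpen_iff.1 hO s hsO
    obtain ⟨q, hq0, hqr⟩ := exists_rat_btwn hr'
    have hq0' : 0 < q := by exact_mod_cast hq0
    obtain ⟨hb1, hb2, hd⟩ := hg3 s q (hSωK hsS) hq0'
    have hsub : Metric.ball s (q:ℝ) ⊆ O :=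
      (Metric.ball_subset_ball hqr.le).trans hball'
    obtain ⟨hS1, hS2⟩ := hwitS s hsS q
    exact ⟨(g s q).1, ⟨hsub hb1, subset_closure hS1⟩,
           (g s q).2, ⟨hsub hb2, subset_closure hS2⟩, hd⟩
  -- the values on Sω
  set T := f '' Sω with hTdef
  have hTne : T.Nonempty := hSωne.image f
  obtain ⟨e, he⟩ := (hSωc.image f).exists_eq_range hTne
  set Gs := {y : Y | ε/4 < Metric.infDist y T} with hGdef
  set Hs := {y : Y | Metric.infDist y T < ε/3} with hHdef
  have hGo : IsOpen Gs := isOpen_lt continuous_const (Metric.continuous_infDist_pt T)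
  have hHo : IsOpen Hs := isOpen_lt (Metric.continuous_infDist_pt T) continuous_const
  obtain ⟨D, hDc, hDeq⟩ := hf Gs hGo
  obtain ⟨C, hCc, hCeq⟩ := hf Hs hHo
  have hLcov : L ⊆ ⋃ i : ℕ ⊕ ℕ, Sum.elim D C i := by
    intro x _
    rcases lt_or_ge (Metric.infDist (f x) T) (ε/3) with h | h
    · have hx : x ∈ f ⁻¹' Hs := h
      rw [hCeq] at hx
      obtain ⟨m, hm⟩ := mem_iUnion.1 hx
      exact mem_iUnion.2 ⟨Sum.inr m, hm⟩
    · have hx : x ∈ f ⁻¹' Gs := show ε/4 < _ by linarith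
      rw [hDeq] at hx
      obtain ⟨m, hm⟩ := mem_iUnion.1 hx
      exact mem_iUnion.2 ⟨Sum.inl m, hm⟩
  obtain ⟨i, U, hUo, hUne, hUsub⟩ := baire_cover (hered L hLc) hLne (Sum.elim D C)
    (fun i => by cases i with | inl m => exact hDc m | inr m => exact hCc m) hLcov
  obtain ⟨z, hzU, hzL⟩ := hUne
  obtain ⟨r, hr, hball⟩ := Metric.isOpen_iff.1 hUo z hzU
  cases i with
  | inl m =>
    -- impossible: a point of Sω would have value far from all values of Sω
    obtain ⟨s, hsS, hds⟩ := Metric.mem_closure_iff.1 hzL r hr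
    have hsU : s ∈ U := hball (by rw [Metric.mem_ball, dist_comm]; exact hds)
    have hsD : s ∈ D m := hUsub ⟨hsU, subset_closure hsS⟩
    have hsG : f s ∈ Gs := by
      have : s ∈ f ⁻¹' Gs := by rw [hDeq]; exact mem_iUnion.2 ⟨m, hsD⟩
      exact this
    have h0 : Metric.infDist (f s) T = 0 :=
      Metric.infDist_zero_of_mem ⟨s, hsS, rfl⟩
    have : ε/4 < (0:ℝ) := by rw [← h0]; exact hsG
    linarith
  | inr m =>
    -- locally values are ε/3-close to values of Sω; localize further
    set ρ := r/2 with hρdef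
    have hρ : 0 < ρ := by positivity
    have hρU : Metric.closedBall z ρ ⊆ U :=
      (Metric.closedBall_subset_ball (by rw [hρdef]; linarith)).trans hball
    set L' := closure (L ∩ Metric.ball z ρ) with hL'def
    have hL'c : IsClosed L' := isClosed_closure
    have hL'ne : L'.Nonempty := ⟨z, subset_closure ⟨hzL, Metric.mem_ball_self hρ⟩⟩
    have hL'U : L' ⊆ U := by
      refine (closure_minimal ?_ Metric.isClosed_closedBall).trans hρU
      exact fun x hx => Metric.ball_subset_closedBall hx.2
    have hL'L : L' ⊆ L := closure_minimal inter_subset_left hLc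
    have hCk : ∀ k : ℕ, ∃ Ck : ℕ → Set X, (∀ m', IsClosed (Ck m')) ∧
        f ⁻¹' (Metric.ball (e k) (ε/3)) = ⋃ m', Ck m' :=
      fun k => hf _ Metric.isOpen_ball
    choose C' hC'c hC'eq using hCk
    have hL'cov : L' ⊆ ⋃ p : ℕ × ℕ, C' p.1 p.2 := by
      intro x hx
      have hxC : x ∈ C m := hUsub ⟨hL'U hx, hL'L hx⟩
      have hxH : f x ∈ Hs := by
        have : x ∈ f ⁻¹' Hs := by rw [hCeq]; exact mem_iUnion.2 ⟨m, hxC⟩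
        exact this
      obtain ⟨t, htT, hdt⟩ := (Metric.infDist_lt_iff hTne).1 hxH
      have heT : T = range e := he
      rw [heT] at htT
      obtain ⟨k, rfl⟩ := htT
      have : x ∈ f ⁻¹' (Metric.ball (e k) (ε/3)) := Metric.mem_ball.2 hdt
      rw [hC'eq k] at this
      obtain ⟨m', hm'⟩ := mem_iUnion.1 this
      exact mem_iUnion.2 ⟨(k, m'), hm'⟩
    obtain ⟨⟨k, m'⟩, U', hU'o, hU'ne, hU'sub⟩ := baire_cover (hered L' hL'c) hL'ne
      (fun p : ℕ × ℕ => C' p.1 p.2) (fun p => hC'c p.1 p.2) hL'cov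
    obtain ⟨p, hpU', hpL'⟩ := hU'ne
    obtain ⟨r', hr', hball'⟩ := Metric.isOpen_iff.1 hU'o p hpU'
    obtain ⟨w, hwLB, hdw⟩ := Metric.mem_closure_iff.1 hpL' r' hr'
    have hwU' : w ∈ U' := hball' (by rw [Metric.mem_ball, dist_comm]; exact hdw)
    set O := U' ∩ Metric.ball z ρ with hOdef
    have hOo : IsOpen O := hU'o.inter Metric.isOpen_ball
    have hwO : w ∈ O := ⟨hwU', hwLB.2⟩
    have hOsub : ∀ x ∈ O ∩ L, f x ∈ Metric.ball (e k) (ε/3) := by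
      rintro x ⟨⟨hxU', hxB⟩, hxL⟩
      have hxL' : x ∈ L' := subset_closure ⟨hxL, hxB⟩
      have hxC' : x ∈ C' k m' := hU'sub ⟨hxU', hxL'⟩
      have : x ∈ f ⁻¹' (Metric.ball (e k) (ε/3)) := by
        rw [hC'eq k]; exact mem_iUnion.2 ⟨m', hxC'⟩
      exact this
    obtain ⟨u, huO, v, hvO, hd⟩ := hQL w hwLB.1 O hOo hwO
    have h1 : dist (f u) (e k) < ε/3 := Metric.mem_ball.1 (hOsub u huO)
    have h2 : dist (f v) (e k) < ε/3 := Metric.mem_ball.1 (hOsub v hvO)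
    have h3 : dist (f u) (f v) ≤ dist (f u) (e k) + dist (e k) (f v) := dist_triangle _ _ _
    have h4 : dist (e k) (f v) = dist (f v) (e k) := dist_comm _ _
    linarith
end

section
/- Let X be a topological space, G ⊆ X a functionally open set (i.e., G = φ⁻¹((0,1]) for some continuous φ : X → [0,1]), Y a contractible topological space with contraction to a point y₀, and g : G → Y the pointwise limit of a sequence of continuous maps G → Y. Then the map f : X → Y defined by f(x) = g(x) for x ∈ G and f(x) = y₀ for x ∉ G is the pointwise limit of a sequence of continuous maps X → Y. -/
open Set Filter Topology unitInterval Classical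

/-!
Write `g = lim gₙ` on `G` and let `cₙ x = clamp (2 - (n + 1) φ x)` in `[0,1]`: it is `1` on the
neighbourhood `{φ < 1 / (n + 1)}` of `X \ G`, and for `x ∈ G` it is `0` for all large `n`. Then
`fₙ x = γ (gₙ x, cₙ x)` on `G` and `fₙ = y₀` off `G` glue continuously, since the contraction
sends everything to `y₀` at time `1`, and `fₙ x = gₙ x` eventually for `x ∈ G`.
-/

section Gluing

variable {X Y : Type*} [TopologicalSpace X] [TopologicalSpace Y]

theorem continuous_dite_const_of_eq_on_nhds {G V : Set X} (hG : IsOpen G) (hV : IsOpen V)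
    (hGV : Gᶜ ⊆ V) {h : G → Y} (hh : Continuous h) {y₀ : Y}
    (hVh : ∀ x (hx : x ∈ G), x ∈ V → h ⟨x, hx⟩ = y₀) :
    Continuous fun x => if hx : x ∈ G then h ⟨x, hx⟩ else y₀ := by
  refine continuous_iff_continuousAt.2 fun x₀ => ?_
  by_cases hx₀ : x₀ ∈ G
  · refine (continuousOn_iff_continuous_domRestrict.2 ?_).continuousAt (hG.mem_nhds hx₀)
    convert hh using 1
    funext ⟨x, hx⟩
    simp [hx]
  · refine (continuousAt_const (y := y₀)).congr ?_
    filter_upwards [hV.mem_nhds (hGV hx₀)] with x hx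
    split_ifs with hxG
    · exact (hVh x hxG hx).symm
    · rfl

end Gluing

noncomputable def cutoff (n : ℕ) (t : ℝ) : I :=
  projIcc 0 1 zero_le_one (2 - (n + 1) * t)

theorem continuous_cutoff (n : ℕ) : Continuous (cutoff n) :=
  continuous_projIcc.comp (by fun_prop)

theorem cutoff_eq_one {n : ℕ} {t : ℝ} (ht : (n + 1) * t ≤ 1) : cutoff n t = 1 :=
  projIcc_of_right_le _ (by linarith)

theorem eventually_cutoff_eq_zero {t : ℝ} (ht : 0 < t) : ∀ᶠ n : ℕ in atTop, cutoff n t = 0 := by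
  have hlim : Tendsto (fun n : ℕ => ((n : ℝ) + 1) * t) atTop atTop :=
    (tendsto_atTop_add_const_right _ 1 tendsto_natCast_atTop_atTop).atTop_mul_const ht
  filter_upwards [hlim.eventually_ge_atTop 2] with n hn
  exact projIcc_of_le_left _ (by linarith)

theorem stmt7 {X Y : Type*} [TopologicalSpace X] [TopologicalSpace Y]
    (φ : X → I) (hφ : Continuous φ) (G : Set X) (hG : G = φ ⁻¹' {t : I | 0 < (t : ℝ)})
    (y₀ : Y) (γ : Y × I → Y) (hγ : Continuous γ)
    (hγ0 : ∀ y, γ (y, 0) = y) (hγ1 : ∀ y, γ (y, 1) = y₀)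
    (g : G → Y)
    (hg : ∃ gn : ℕ → G → Y, (∀ n, Continuous (gn n)) ∧
      ∀ x : G, Tendsto (fun n => gn n x) atTop (nhds (g x)))
    (f : X → Y) (hf : ∀ x, f x = if h : x ∈ G then g ⟨x, h⟩ else y₀) :
    ∃ fn : ℕ → X → Y, (∀ n, Continuous (fn n)) ∧
      ∀ x, Tendsto (fun n => fn n x) atTop (nhds (f x)) := by
  obtain ⟨gn, hgn, hgt⟩ := hg
  have hφ' : Continuous fun x => (φ x : ℝ) := continuous_subtype_val.comp hφ
  have hGo : IsOpen G := hG ▸ isOpen_lt continuous_const hφ'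
  refine ⟨fun n x => if hx : x ∈ G then γ (gn n ⟨x, hx⟩, cutoff n (φ x)) else y₀,
    fun n => ?_, fun x => ?_⟩
  · refine continuous_dite_const_of_eq_on_nhds (V := {x | (n + 1) * (φ x : ℝ) < 1}) hGo
      (isOpen_lt (continuous_const.mul hφ') continuous_const) (fun x hx => ?_)
      (hγ.comp ((hgn n).prodMk ((continuous_cutoff n).comp (hφ'.comp continuous_subtype_val))))
      (fun x _ hxV => by simp only [Function.comp_apply, cutoff_eq_one hxV.le, hγ1])
    have hφx : φ x = 0 := by simpa [hG] using hx
    simp [hφx]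
  · by_cases hx : x ∈ G
    · rw [hf, dif_pos hx]
      refine (hgt ⟨x, hx⟩).congr' ?_
      filter_upwards [eventually_cutoff_eq_zero (by rw [hG] at hx; exact hx)] with n hn
      simp only [dif_pos hx, hn, hγ0]
    · simpa only [hf, dif_neg hx] using tendsto_const_nhds
end

section
/- Let X and Y be topological spaces, f : X → Y and g : Y → Z maps between topological spaces each having a σ-discrete base consisting of sets contained in members of discrete open families (σ-strongly-discrete base). Then the composition g ∘ f : X → Z has a σ-discrete base. -/
open Set

/-- `h` has a σ-strongly-discrete base. -/
def HasSigmaSDBase {X W : Type*} [TopologicalSpace X] [TopologicalSpace W] (h : X → W) : Prop :=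
  ∃ b : ℕ → Set (Set X), (∀ n, IsStronglyDiscreteFamily (b n)) ∧
    ∀ V : Set W, IsOpen V → ∃ S ⊆ ⋃ n, b n, h ⁻¹' V = ⋃₀ S

/-- `h` has a σ-discrete base. -/
def HasSigmaDiscreteBase {X W : Type*} [TopologicalSpace X] [TopologicalSpace W]
    (h : X → W) : Prop :=
  ∃ b : ℕ → Set (Set X), (∀ n, IsDiscreteFamily (b n)) ∧
    ∀ V : Set W, IsOpen V → ∃ S ⊆ ⋃ n, b n, h ⁻¹' V = ⋃₀ S

theorem stmt8 {X Y Z : Type*} [TopologicalSpace X] [TopologicalSpace Y] [TopologicalSpace Z]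
    (f : X → Y) (g : Y → Z) (hf : HasSigmaSDBase f) (hg : HasSigmaSDBase g) :
    HasSigmaDiscreteBase (g ∘ f) := by
  classical
  obtain ⟨bf, hbf, hfbase⟩ := hf
  obtain ⟨bg, hbg, hgbase⟩ := hg
  choose u hu1 hu2 using hbf
  choose v hv1 hv2 using hbg
  -- decompose preimages of the open sets `v n B`
  have hT : ∀ n B, B ∈ bg n → ∃ T ⊆ ⋃ m, bf m, f ⁻¹' (v n B) = ⋃₀ T :=
    fun n B hB => hfbase _ (hv1 n B hB).1
  choose! T hT1 hT2 using hT
  -- the new families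
  set c : ℕ → ℕ → Set (Set X) := fun n m =>
    {C | ∃ B ∈ bg n, ∃ A ∈ bf m, A ⊆ f ⁻¹' (v n B) ∧ C = A ∩ f ⁻¹' B} with hc
  refine ⟨fun k => c k.unpair.1 k.unpair.2, ?_, ?_⟩
  · -- discreteness
    intro k x
    obtain ⟨Vx, hVx, hVsub⟩ := hu2 k.unpair.2 x
    refine ⟨Vx, hVx, ?_⟩
    rintro C₁ ⟨⟨B₁, hB₁, A₁, hA₁, hAv₁, rfl⟩, hne₁⟩ C₂ ⟨⟨B₂, hB₂, A₂, hA₂, hAv₂, rfl⟩, hne₂⟩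
    -- the A's coincide
    have hA12 : A₁ = A₂ := by
      have h1 : A₁ ∈ {A ∈ bf k.unpair.2 | (u k.unpair.2 A ∩ Vx).Nonempty} := by
        obtain ⟨a, ha⟩ := hne₁
        exact ⟨hA₁, a, (hu1 _ _ hA₁).2 (subset_closure ha.1.1), ha.2⟩
      have h2 : A₂ ∈ {A ∈ bf k.unpair.2 | (u k.unpair.2 A ∩ Vx).Nonempty} := by
        obtain ⟨a, ha⟩ := hne₂
        exact ⟨hA₂, a, (hu1 _ _ hA₂).2 (subset_closure ha.1.1), ha.2⟩
      exact hVsub h1 h2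
    subst hA12
    -- the B's coincide
    obtain ⟨a, ha⟩ := hne₁
    have haA : a ∈ A₁ := ha.1.1
    obtain ⟨W, hW, hWsub⟩ := hv2 k.unpair.1 (f a)
    have hfaW : f a ∈ W := mem_of_mem_nhds hW
    have hB12 : B₁ = B₂ :=
      hWsub ⟨hB₁, f a, hAv₁ haA, hfaW⟩ ⟨hB₂, f a, hAv₂ haA, hfaW⟩
    rw [hB12]
  · -- base property
    intro V hV
    obtain ⟨S, hS1, hS2⟩ := hgbase V hV
    refine ⟨{C | ∃ n, ∃ B, B ∈ S ∧ B ∈ bg n ∧ ∃ A ∈ T n B, C = A ∩ f ⁻¹' B}, ?_, ?_⟩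
    · rintro C ⟨n, B, hBS, hBn, A, hAT, rfl⟩
      have hAm : A ∈ ⋃ m, bf m := hT1 n B hBn hAT
      obtain ⟨m, hm⟩ := mem_iUnion.1 hAm
      refine mem_iUnion.2 ⟨Nat.pair n m, ?_⟩
      have hsub : A ⊆ f ⁻¹' (v n B) := by
        rw [hT2 n B hBn]; exact fun x hx => ⟨A, hAT, hx⟩
      simp only [Nat.unpair_pair]
      exact ⟨B, hBn, A, hm, hsub, rfl⟩
    · ext x
      constructor
      · intro hx
        have hfx : f x ∈ g ⁻¹' V := hx
        rw [hS2] at hfx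
        obtain ⟨B, hBS, hfxB⟩ := hfx
        obtain ⟨n, hBn⟩ := mem_iUnion.1 (hS1 hBS)
        have hxv : x ∈ f ⁻¹' (v n B) := (hv1 n B hBn).2 (subset_closure hfxB)
        rw [hT2 n B hBn] at hxv
        obtain ⟨A, hAT, hxA⟩ := hxv
        exact ⟨A ∩ f ⁻¹' B, ⟨n, B, hBS, hBn, A, hAT, rfl⟩, hxA, hfxB⟩
      · rintro ⟨C, ⟨n, B, hBS, hBn, A, hAT, rfl⟩, hxA, hxB⟩
        have : f x ∈ ⋃₀ S := ⟨B, hBS, hxB⟩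
        rw [← hS2] at this
        exact this
end

section
/- Let X, Y be topological spaces and (f_n) a sequence of maps X → Y converging stably to f (for each x there is N with f_n(x) = f(x) for all n ≥ N), where each f_n is a right Baire-one compositor (for every topological space Z and every g : Y → Z which is a pointwise limit of continuous maps, g ∘ f_n is a pointwise limit of continuous maps). Then for every topological space Z and every Baire class 2 map g : Y → Z (pointwise limit of Baire class 1 maps), g ∘ f is of Baire class 2. -/
open Filter Topology

/-- Baire class one: pointwise limit of a sequence of continuous maps. -/
def IsBaireOne {X Y : Type*} [TopologicalSpace X] [TopologicalSpace Y] (g : X → Y) : Prop :=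
  ∃ h : ℕ → X → Y, (∀ n, Continuous (h n)) ∧
    ∀ x, Tendsto (fun n => h n x) atTop (nhds (g x))

/-- Baire class two: pointwise limit of a sequence of Baire class one maps. -/
def IsBaireTwo {X Y : Type*} [TopologicalSpace X] [TopologicalSpace Y] (g : X → Y) : Prop :=
  ∃ h : ℕ → X → Y, (∀ n, IsBaireOne (h n)) ∧
    ∀ x, Tendsto (fun n => h n x) atTop (nhds (g x))

universe u

theorem stmt9 {X Y : Type*} [TopologicalSpace X] [TopologicalSpace Y]
    (f : X → Y) (fs : ℕ → X → Y)
    (hst : ∀ x, ∃ N, ∀ n ≥ N, fs n x = f x)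
    (hcomp : ∀ n, ∀ (Z : Type u) [TopologicalSpace Z] (g : Y → Z),
      IsBaireOne g → IsBaireOne (g ∘ fs n)) :
    ∀ (Z : Type u) [TopologicalSpace Z] (g : Y → Z),
      IsBaireTwo g → IsBaireTwo (g ∘ f) := by
  intro Z _ g hg
  obtain ⟨h, hB1, hlim⟩ := hg
  refine ⟨fun k => h k ∘ fs k, fun k => hcomp k Z (h k) (hB1 k), fun x => ?_⟩
  have : Tendsto (fun k => h k (f x)) atTop (nhds (g (f x))) := hlim (f x)
  refine this.congr' ?_
  obtain ⟨N, hN⟩ := hst x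
  filter_upwards [eventually_ge_atTop N] with k hk
  simp [hN k hk]
end

section
/- Let X be a topological space, Y a metric space, and f : X → Y the stable limit of a sequence of continuous maps f_n : X → Y (for each x there is N with f_n(x) = f(x) for n ≥ N). Then there exist countably many closed sets X_n covering X such that f restricted to each X_n is continuous. Moreover if Y is a metric space, the sets X_n can be taken to be functionally closed (zero sets of continuous real functions). -/
open Set

theorem stmt10 {X Y : Type*} [TopologicalSpace X] [MetricSpace Y]
    (f : X → Y) (fs : ℕ → X → Y) (hcont : ∀ n, Continuous (fs n))
    (hst : ∀ x, ∃ N, ∀ n ≥ N, fs n x = f x) :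
    ∃ F : ℕ → Set X, (⋃ n, F n) = univ ∧
      ∀ n, IsClosed (F n) ∧
        (∃ φ : X → ℝ, Continuous φ ∧ F n = φ ⁻¹' {0}) ∧
        ContinuousOn f (F n) := by
  set g : ℕ → ℕ → X → ℝ := fun n k x => (1/2 : ℝ)^k * min (dist (fs (n+k) x) (fs n x)) 1
    with hg
  have hg0 : ∀ n k x, 0 ≤ g n k x := fun n k x => by
    apply mul_nonneg (by positivity)
    exact le_min dist_nonneg zero_le_one
  have hgsum : ∀ n x, Summable (fun k => g n k x) := by
    intro n x
    apply Summable.of_nonneg_of_le (fun k => hg0 n k x)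
      (fun k => ?_) (summable_geometric_of_lt_one (by norm_num) (by norm_num) : Summable fun k => (1/2:ℝ)^k)
    calc g n k x ≤ (1/2:ℝ)^k * 1 := by
          apply mul_le_mul_of_nonneg_left (min_le_right _ _) (by positivity)
      _ = (1/2:ℝ)^k := mul_one _
  set φ : ℕ → X → ℝ := fun n x => ∑' k, g n k x with hφ
  have hφcont : ∀ n, Continuous (φ n) := by
    intro n
    apply continuous_tsum (u := fun k => (1/2:ℝ)^k)
    · intro k
      exact continuous_const.mul (((hcont _).dist (hcont n)).min continuous_const)
    · exact summable_geometric_of_lt_one (by norm_num) (by norm_num)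
    · intro k x
      rw [Real.norm_of_nonneg (hg0 n k x)]
      calc g n k x ≤ (1/2:ℝ)^k * 1 := by
            apply mul_le_mul_of_nonneg_left (min_le_right _ _) (by positivity)
        _ = (1/2:ℝ)^k := mul_one _
  have key : ∀ n x, φ n x = 0 ↔ ∀ k ≥ n, fs k x = fs n x := by
    intro n x
    constructor
    · intro h k hk
      by_contra hne
      have hd : 0 < dist (fs k x) (fs n x) := dist_pos.2 hne
      obtain ⟨j, rfl⟩ := Nat.exists_eq_add_of_le hk
      have : 0 < g n j x := by
        apply mul_pos (by positivity)
        exact lt_min hd one_pos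
      have := Summable.tsum_pos (hgsum n x) (hg0 n · x) j this
      linarith [h ▸ this]
    · intro h
      have : ∀ k, g n k x = 0 := by
        intro k
        have := h (n + k) (Nat.le_add_right n k)
        simp [hg, this]
      simp [hφ, this]
  refine ⟨fun n => {x | ∀ k ≥ n, fs k x = fs n x}, ?_, fun n => ?_⟩
  · ext x
    simp only [mem_iUnion, mem_univ, iff_true]
    obtain ⟨N, hN⟩ := hst x
    exact ⟨N, fun k hk => (hN k hk).trans (hN N le_rfl).symm⟩
  · have hFeq : {x | ∀ k ≥ n, fs k x = fs n x} = φ n ⁻¹' {0} := by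
      ext x; simp [key n x]
    refine ⟨?_, ⟨φ n, hφcont n, hFeq⟩, ?_⟩
    · simp only []; rw [hFeq]; exact isClosed_singleton.preimage (hφcont n)
    · apply ContinuousOn.congr ((hcont n).continuousOn)
      intro x hx
      obtain ⟨N, hN⟩ := hst x
      have h1 := hx (max n N) (le_max_left _ _)
      have h2 := hN (max n N) (le_max_right _ _)
      rw [← h2, h1]
end

section
/- Let X, Y be metric spaces and let f : X → Y be piecewise continuous: there is a countable closed cover (F_n) of X with each restriction f|F_n continuous. Then for every function ε : Y → ℝ with ε(y) > 0 for all y, there exists δ : X → ℝ with δ(x) > 0 for all x, such that for all x, y ∈ X, dist(x,y) < min(δ(x), δ(y)) implies dist(f(x), f(y)) < min(ε(f(x)), ε(f(y))). -/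
open Set

theorem stmt11 {X Y : Type*} [MetricSpace X] [MetricSpace Y] (f : X → Y)
    (F : ℕ → Set X) (hclosed : ∀ n, IsClosed (F n)) (hcov : (⋃ n, F n) = univ)
    (hcont : ∀ n, ContinuousOn f (F n)) :
    ∀ ε : Y → ℝ, (∀ y, ε y > 0) → ∃ δ : X → ℝ, (∀ x, δ x > 0) ∧
      ∀ x y, dist x y < min (δ x) (δ y) →
        dist (f x) (f y) < min (ε (f x)) (ε (f y)) := by
  classical
  intro ε hε
  have hmem : ∀ x : X, ∃ n, x ∈ F n := by
    intro x
    have hx : x ∈ ⋃ n, F n := by rw [hcov]; trivial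
    exact mem_iUnion.mp hx
  set N : X → ℕ := fun x => Nat.find (hmem x) with hNdef
  have hN : ∀ x, x ∈ F (N x) := fun x => Nat.find_spec (hmem x)
  have hNlt : ∀ x m, m < N x → x ∉ F m := fun x m hm => Nat.find_min (hmem x) hm
  -- radius avoiding earlier pieces
  have h1 : ∀ x : X, ∃ r > 0, ∀ m < N x, ∀ z, dist x z < r → z ∉ F m := by
    intro x
    have hcl : IsClosed (⋃ m ∈ Finset.range (N x), F m) :=
      isClosed_biUnion_finset (fun m _ => hclosed m)
    have hxm : x ∈ (⋃ m ∈ Finset.range (N x), F m)ᶜ := by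
      simp only [mem_compl_iff, mem_iUnion, Finset.mem_range, not_exists]
      intro m hm
      exact hNlt x m hm
    obtain ⟨r, hr, hball⟩ := Metric.isOpen_iff.mp hcl.isOpen_compl x hxm
    refine ⟨r, hr, fun m hm z hz hzF => ?_⟩
    have : z ∈ Metric.ball x r := by
      rw [Metric.mem_ball, dist_comm]; exact hz
    have := hball this
    simp only [mem_compl_iff, mem_iUnion, Finset.mem_range, not_exists] at this
    exact this m hm hzF
  -- continuity radius
  have h2 : ∀ x : X, ∃ r > 0, ∀ z ∈ F (N x), dist x z < r → dist (f x) (f z) < ε (f x) := by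
    intro x
    have := hcont (N x) x (hN x)
    rw [Metric.continuousWithinAt_iff] at this
    obtain ⟨r, hr, h⟩ := this (ε (f x)) (hε (f x))
    refine ⟨r, hr, fun z hz hd => ?_⟩
    have := h hz (by rwa [dist_comm])
    rwa [dist_comm]
  choose r1 hr1 hr1' using h1
  choose r2 hr2 hr2' using h2
  refine ⟨fun x => min (r1 x) (r2 x), fun x => lt_min (hr1 x) (hr2 x), ?_⟩
  intro x y hxy
  have hx1 : dist x y < r1 x := lt_of_lt_of_le hxy (le_trans (min_le_left _ _) (min_le_left _ _))
  have hx2 : dist x y < r2 x := lt_of_lt_of_le hxy (le_trans (min_le_left _ _) (min_le_right _ _))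
  have hy1 : dist y x < r1 y := by
    rw [dist_comm]
    exact lt_of_lt_of_le hxy (le_trans (min_le_right _ _) (min_le_left _ _))
  have hy2 : dist y x < r2 y := by
    rw [dist_comm]
    exact lt_of_lt_of_le hxy (le_trans (min_le_right _ _) (min_le_right _ _))
  -- N x = N y
  have hxy' : N x = N y := by
    rcases lt_trichotomy (N x) (N y) with h | h | h
    · exact absurd (hN x) (hr1' y (N x) h x hy1)
    · exact h
    · exact absurd (hN y) (hr1' x (N y) h y hx1)
  have hyF : y ∈ F (N x) := hxy' ▸ hN y
  have hxF : x ∈ F (N y) := hxy'.symm ▸ hN x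
  have d1 : dist (f x) (f y) < ε (f x) := hr2' x y hyF hx2
  have d2 : dist (f y) (f x) < ε (f y) := hr2' y x hxF hy2
  rw [dist_comm] at d2
  exact lt_min d1 d2
end

section
/- Let X, Y be metric spaces and f : X → Y a map such that for every ε : Y → ℝ positive-valued there exists δ : X → ℝ positive-valued with: dist(x,y) < min(δ(x),δ(y)) implies dist(f(x),f(y)) < min(ε(f(x)),ε(f(y))) for all x,y. Then for every open set V ⊆ Y, the preimage f⁻¹(V) is a Gδ set in X. -/
open Set

theorem stmt12 {X Y : Type*} [MetricSpace X] [MetricSpace Y] (f : X → Y)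
    (h : ∀ ε : Y → ℝ, (∀ y, ε y > 0) → ∃ δ : X → ℝ, (∀ x, δ x > 0) ∧
      ∀ x y, dist x y < min (δ x) (δ y) →
        dist (f x) (f y) < min (ε (f x)) (ε (f y))) :
    ∀ V : Set Y, IsOpen V → IsGδ (f ⁻¹' V) := by
  classical
  intro V hV
  rcases eq_or_ne V univ with rfl | hne
  · simp
  have hVc : Vᶜ.Nonempty := nonempty_compl.mpr hne
  set ε : Y → ℝ := fun y => if y ∈ V then Metric.infDist y Vᶜ else 1 with hεdef
  have hε : ∀ y, ε y > 0 := by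
    intro y
    by_cases hy : y ∈ V
    · simp only [hεdef, if_pos hy]
      exact (hV.isClosed_compl.notMem_iff_infDist_pos hVc).mp (by simpa using hy)
    · simp [hεdef, if_neg hy]
  obtain ⟨δ, hδ, hδf⟩ := h ε hε
  have key : f ⁻¹' V = ⋂ n : ℕ, ⋃ x ∈ f ⁻¹' V, Metric.ball x (min (δ x) (1 / (n + 1))) := by
    ext z
    constructor
    · intro hz
      refine mem_iInter.mpr fun n => mem_iUnion₂.mpr ⟨z, hz, ?_⟩
      simp only [Metric.mem_ball, dist_self]
      exact lt_min (hδ z) (by positivity)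
    · intro hz
      obtain ⟨n, hn⟩ := exists_nat_one_div_lt (hδ z)
      obtain ⟨x, hx, hball⟩ := mem_iUnion₂.mp (mem_iInter.mp hz n)
      rw [Metric.mem_ball] at hball
      have hdzx : dist z x < min (δ z) (δ x) :=
        lt_min (lt_trans (lt_of_lt_of_le hball (min_le_right _ _)) hn)
          (lt_of_lt_of_le hball (min_le_left _ _))
      have := hδf z x hdzx
      by_contra hfz
      have hεfx : ε (f x) = Metric.infDist (f x) Vᶜ := if_pos hx
      have h1 : dist (f z) (f x) < Metric.infDist (f x) Vᶜ := by
        calc dist (f z) (f x) < min (ε (f z)) (ε (f x)) := this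
          _ ≤ ε (f x) := min_le_right _ _
          _ = _ := hεfx
      have h2 : Metric.infDist (f x) Vᶜ ≤ dist (f x) (f z) :=
        Metric.infDist_le_dist_of_mem (by simpa using hfz)
      rw [dist_comm] at h2
      exact absurd h1 (not_lt.mpr h2)
  rw [key]
  exact .iInter_of_isOpen fun n => isOpen_biUnion fun x _ => Metric.isOpen_ball
end

section
/- Let X be a metric space which is hereditarily Baire and Y a metric space. If f : X → Y is barely continuous (every restriction to a nonempty closed set has a continuity point), then for every ε > 0 there exists a function δ : X → ℝ with δ(x) > 0 such that dist(x,y) < min(δ(x), δ(y)) implies dist(f(x), f(y)) < ε for all x, y ∈ X. -/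
open Set

/-!
Fix `ε > 0` and let `D F` be the set of points `x` such that `f` varies by at least `ε` on
`F ∩ ball x r` for every `r > 0`. Iterating `D` transfinitely from `univ` gives a decreasing
chain which reaches the greatest fixed point of `D`. A fixed point `F = D F` is closed, and a
continuity point of `f|F` is not in `D F`, so that fixed point is empty. Each `x` therefore
leaves the chain at some stage: `x ∈ G` but `x ∉ D G`, so `f` varies by less than `ε` on
`G ∩ ball x (δ x)`. If `x` leaves no later than `y`, then `y` also lies in that `G`.
-/

namespace OrdinalApprox

theorem exists_mem_gfpApprox_notMem_apply {α : Type*} (f : Set α →o Set α) {x : α}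
    (a : Ordinal) (hx : x ∉ gfpApprox f ⊤ a) :
    ∃ b < a, x ∈ gfpApprox f ⊤ b ∧ x ∉ f (gfpApprox f ⊤ b) := by
  induction a using WellFoundedLT.induction with
  | ind a ih =>
    rw [gfpApprox] at hx
    simp only [top_inf_eq, iInf_eq_iInter, mem_iInter, not_forall] at hx
    obtain ⟨b, hba, hxb⟩ := hx
    by_cases hb : x ∈ gfpApprox f ⊤ b
    · exact ⟨b, hba, hb, hxb⟩
    · obtain ⟨c, hcb, hc⟩ := ih b hba hb
      exact ⟨c, hcb.trans hba, hc⟩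

end OrdinalApprox

section Oscillation

variable {X Y : Type*} [PseudoMetricSpace X] [PseudoMetricSpace Y]

def oscDerivative (f : X → Y) (ε : ℝ) (F : Set X) : Set X :=
  {x | ∀ r > 0, ∃ y ∈ F ∩ Metric.ball x r, ∃ z ∈ F ∩ Metric.ball x r, ε ≤ dist (f y) (f z)}

theorem oscDerivative_mono (f : X → Y) (ε : ℝ) : Monotone (oscDerivative f ε) := by
  intro F G hFG x hx r hr
  obtain ⟨y, hy, z, hz, hyz⟩ := hx r hr
  exact ⟨y, ⟨hFG hy.1, hy.2⟩, z, ⟨hFG hz.1, hz.2⟩, hyz⟩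

theorem isClosed_oscDerivative (f : X → Y) (ε : ℝ) (F : Set X) :
    IsClosed (oscDerivative f ε F) := by
  refine isClosed_of_closure_subset fun x hx r hr => ?_
  obtain ⟨x', hx', hxx'⟩ := Metric.mem_closure_iff.1 hx (r / 2) (half_pos hr)
  obtain ⟨y, hy, z, hz, hyz⟩ := hx' (r / 2) (half_pos hr)
  have hball : Metric.ball x' (r / 2) ⊆ Metric.ball x r := by
    refine Metric.ball_subset ?_
    rw [dist_comm]
    linarith
  exact ⟨y, ⟨hy.1, hball hy.2⟩, z, ⟨hz.1, hball hz.2⟩, hyz⟩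

theorem notMem_oscDerivative_of_continuousWithinAt {f : X → Y} {ε : ℝ} (hε : 0 < ε)
    {F : Set X} {x : X} (hx : ContinuousWithinAt f F x) : x ∉ oscDerivative f ε F := by
  intro hosc
  obtain ⟨r, hr, hball⟩ := Metric.continuousWithinAt_iff.1 hx (ε / 2) (half_pos hε)
  obtain ⟨y, hy, z, hz, hyz⟩ := hosc r hr
  have hfy : dist (f y) (f x) < ε / 2 := hball hy.1 hy.2
  have hfz : dist (f z) (f x) < ε / 2 := hball hz.1 hz.2
  linarith [dist_triangle_right (f y) (f z) (f x)]

theorem eq_empty_of_oscDerivative_eq {f : X → Y}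
    (hbc : ∀ F : Set X, IsClosed F → F.Nonempty → ∃ x ∈ F, ContinuousWithinAt f F x)
    {ε : ℝ} (hε : 0 < ε) {F : Set X} (hF : oscDerivative f ε F = F) : F = ∅ := by
  have hclosed : IsClosed F := hF ▸ isClosed_oscDerivative f ε F
  by_contra hne
  obtain ⟨x, hxF, hx⟩ := hbc F hclosed (nonempty_iff_ne_empty.2 hne)
  exact notMem_oscDerivative_of_continuousWithinAt hε hx (hF.symm ▸ hxF)

theorem exists_forall_dist_lt_of_antitone {f : X → Y} {ε : ℝ} {ι : Type*} [LinearOrder ι]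
    {G : ι → Set X} (hG : Antitone G)
    (hleave : ∀ x, ∃ i, x ∈ G i ∧ x ∉ oscDerivative f ε (G i)) :
    ∃ δ : X → ℝ, (∀ x, δ x > 0) ∧
      ∀ x y, dist x y < min (δ x) (δ y) → dist (f x) (f y) < ε := by
  choose i hxi hosc using hleave
  simp only [oscDerivative, mem_ofPred_eq] at hosc
  push Not at hosc
  choose δ hδ hδosc using hosc
  refine ⟨δ, hδ, fun x y hxy => ?_⟩
  wlog hle : i x ≤ i y generalizing x y
  · rw [dist_comm] at hxy ⊢
    exact this y x (min_comm (δ x) (δ y) ▸ hxy) (le_of_not_ge hle)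
  have hy : y ∈ G (i x) ∩ Metric.ball x (δ x) :=
    ⟨hG hle (hxi y), by rw [Metric.mem_ball, dist_comm]; exact hxy.trans_le (min_le_left _ _)⟩
  exact hδosc x x ⟨hxi x, Metric.mem_ball_self (hδ x)⟩ y hy

end Oscillation

theorem stmt13_general {X Y : Type*} [MetricSpace X] [MetricSpace Y]
    (f : X → Y)
    (hbc : ∀ F : Set X, IsClosed F → F.Nonempty → ∃ x ∈ F, ContinuousWithinAt f F x) :
    ∀ ε > (0 : ℝ), ∃ δ : X → ℝ, (∀ x, δ x > 0) ∧
      ∀ x y, dist x y < min (δ x) (δ y) → dist (f x) (f y) < ε := by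
  intro ε hε
  let D : Set X →o Set X := ⟨oscDerivative f ε, oscDerivative_mono f ε⟩
  have hgfp : D.gfp = ∅ := eq_empty_of_oscDerivative_eq hbc hε D.map_gfp
  obtain ⟨a, ha⟩ := OrdinalApprox.gfp_mem_range_gfpApprox D
  refine exists_forall_dist_lt_of_antitone
    (OrdinalApprox.gfpApprox_anti_right D (x := ⊤)) fun x => ?_
  have hx : x ∉ OrdinalApprox.gfpApprox D ⊤ a := by
    rw [ha, hgfp]
    exact notMem_empty x
  obtain ⟨b, -, hb⟩ := OrdinalApprox.exists_mem_gfpApprox_notMem_apply D a hx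
  exact ⟨b, hb⟩

theorem stmt13 {X Y : Type*} [MetricSpace X] [MetricSpace Y]
    (hered : ∀ F : Set X, IsClosed F → BaireSpace F) (f : X → Y)
    (hbc : ∀ F : Set X, IsClosed F → F.Nonempty → ∃ x ∈ F, ContinuousWithinAt f F x) :
    ∀ ε > (0 : ℝ), ∃ δ : X → ℝ, (∀ x, δ x > 0) ∧
      ∀ x y, dist x y < min (δ x) (δ y) → dist (f x) (f y) < ε :=
  stmt13_general f hbc
end

section
/- Let D be an uncountable set with the discrete topology and X = D ∪ {∞} its one-point compactification. Then no injective map f : X → D (viewed as a map to the discrete space D) admits a σ-discrete base: there is no family B of subsets of X, equal to a countable union of discrete-in-X families, such that the preimage of every subset of D is a union of members of B. -/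
open Set

theorem stmt14 {D : Type*} [TopologicalSpace D] [DiscreteTopology D] [Uncountable D]
    (f : OnePoint D → D) (hf : Function.Injective f) :
    ¬ ∃ b : ℕ → Set (Set (OnePoint D)), (∀ n, IsDiscreteFamily (b n)) ∧
      ∀ V : Set D, ∃ S ⊆ ⋃ n, b n, f ⁻¹' V = ⋃₀ S := by
  rintro ⟨b, hdisc, hbase⟩
  -- each singleton {↑d} belongs to some b n
  have key : ∀ d : D, ∃ n, {((d : OnePoint D))} ∈ b n := by
    intro d
    obtain ⟨S, hS, hSeq⟩ := hbase {f (d : OnePoint D)}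
    have hpre : f ⁻¹' {f (d : OnePoint D)} = {(d : OnePoint D)} := by
      ext x; simp [hf.eq_iff]
    rw [hpre] at hSeq
    have hd : (d : OnePoint D) ∈ ⋃₀ S := by rw [← hSeq]; exact rfl
    obtain ⟨A, hAS, hdA⟩ := hd
    have hAsub : A ⊆ {(d : OnePoint D)} := hSeq ▸ subset_sUnion_of_mem hAS
    have hAeq : A = {(d : OnePoint D)} :=
      hAsub.antisymm (by rintro x rfl; exact hdA)
    have := hS hAS
    rw [hAeq] at this
    exact mem_iUnion.mp this
  choose g hg using key
  -- some fiber of g is uncountable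
  obtain ⟨n, hn⟩ : ∃ n, ¬ (g ⁻¹' {n}).Countable := by
    by_contra h
    push_neg at h
    have : (Set.univ : Set D).Countable := by
      have : (⋃ n, g ⁻¹' {n}) = Set.univ := by
        ext d; simp
      rw [← this]
      exact countable_iUnion h
    exact (Set.not_countable_univ) this
  -- discreteness at ∞
  obtain ⟨U, hU, hsub⟩ := hdisc n (OnePoint.infty)
  -- the set of d with ↑d ∉ U is finite
  have hfin : {d : D | (d : OnePoint D) ∉ U}.Finite := by
    obtain ⟨V, hVU, hVopen, hVinf⟩ := mem_nhds_iff.mp hU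
    have := (OnePoint.isOpen_iff_of_mem hVinf).mp hVopen
    have hcpt : IsCompact (((↑) : D → OnePoint D) ⁻¹' V)ᶜ := this.2
    have hfinV : (((↑) : D → OnePoint D) ⁻¹' V)ᶜ.Finite := hcpt.finite_of_discrete
    exact hfinV.subset fun d hd => fun hdV => hd (hVU hdV)
  -- get two distinct elements of the fiber with ↑d ∈ U
  have huncnt : ¬ ((g ⁻¹' {n}) \ {d : D | (d : OnePoint D) ∉ U}).Countable := by
    intro h
    exact hn ((h.union hfin.countable).mono (by intro d hd; by_cases hdU : (d : OnePoint D) ∉ U <;> simp_all))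
  obtain ⟨d₁, hd₁, d₂, hd₂, hne⟩ : ((g ⁻¹' {n}) \ {d : D | (d : OnePoint D) ∉ U}).Nontrivial := by
    rw [← Set.not_subsingleton_iff]
    exact fun h => huncnt h.countable
  have h₁ : {((d₁ : OnePoint D))} ∈ {A ∈ b n | (A ∩ U).Nonempty} := by
    refine ⟨by have := hg d₁; rwa [hd₁.1] at this, ⟨(d₁ : OnePoint D), rfl, not_not.mp hd₁.2⟩⟩
  have h₂ : {((d₂ : OnePoint D))} ∈ {A ∈ b n | (A ∩ U).Nonempty} := by
    refine ⟨by have := hg d₂; rwa [hd₂.1] at this, ⟨(d₂ : OnePoint D), rfl, not_not.mp hd₂.2⟩⟩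
  have := hsub h₁ h₂
  exact hne (by simpa [OnePoint.coe_eq_coe] using (Set.singleton_eq_singleton_iff.mp this))
end

section
/- Let f : ℝ → ℝ be defined by f(x) = Σ_{n : r_n ≤ x} 2^{-n}, where (r_n) is an enumeration of the rationals. Then f is a pointwise limit of continuous functions (Baire class one), and the set of discontinuity points of f is exactly ℚ. -/
open Set Filter Topology

theorem stmt16 (r : ℕ → ℚ) (hr : Function.Bijective r)
    (f : ℝ → ℝ) (hf : ∀ x, f x = ∑' n : ℕ, if (r n : ℝ) ≤ x then (2 : ℝ)⁻¹ ^ n else 0) :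
    (∃ g : ℕ → ℝ → ℝ, (∀ n, Continuous (g n)) ∧
      ∀ x, Tendsto (fun n => g n x) atTop (nhds (f x))) ∧
    {x : ℝ | ¬ ContinuousAt f x} = Set.range (fun q : ℚ => (q : ℝ)) := by
  classical
  set a : ℝ → ℕ → ℝ := fun x n => if (r n : ℝ) ≤ x then (2 : ℝ)⁻¹ ^ n else 0 with ha
  have hgeo : Summable (fun n : ℕ => (2 : ℝ)⁻¹ ^ n) :=
    summable_geometric_of_lt_one (by norm_num) (by norm_num)
  have ha_nonneg : ∀ x n, 0 ≤ a x n := by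
    intro x n; simp only [ha]; split <;> positivity
  have ha_le : ∀ x n, a x n ≤ (2 : ℝ)⁻¹ ^ n := by
    intro x n; simp only [ha]; split
    · exact le_rfl
    · positivity
  have hsum : ∀ x, Summable (a x) := fun x =>
    hgeo.of_nonneg_of_le (ha_nonneg x) (ha_le x)
  have hmono : ∀ {x y : ℝ}, x ≤ y → ∀ n, a x n ≤ a y n := by
    intro x y hxy n
    simp only [ha]
    split
    · rename_i h
      rw [if_pos (h.trans hxy)]
    · rename_i h
      split
      · positivity
      · exact le_rfl
  constructor
  · -- Baire class one
    set φ : ℕ → ℕ → ℝ → ℝ := fun N n x =>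
      max 0 (min 1 ((N + 1 : ℝ) * (x - (r n : ℝ)) + 1)) with hφ
    have hφ01 : ∀ N n x, 0 ≤ φ N n x ∧ φ N n x ≤ 1 := by
      intro N n x
      refine ⟨le_max_left _ _, max_le (by norm_num) (min_le_left _ _)⟩
    refine ⟨fun N x => ∑' n, (2 : ℝ)⁻¹ ^ n * φ N n x, ?_, ?_⟩
    · intro N
      refine continuous_tsum (fun n => ?_) hgeo (fun n x => ?_)
      · exact continuous_const.mul (continuous_const.max
          (continuous_const.min (by fun_prop)))
      · have h := hφ01 N n x
        rw [Real.norm_eq_abs, abs_mul, abs_of_nonneg h.1,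
          abs_of_nonneg (by positivity : (0:ℝ) ≤ (2 : ℝ)⁻¹ ^ n)]
        calc (2 : ℝ)⁻¹ ^ n * φ N n x ≤ (2 : ℝ)⁻¹ ^ n * 1 := by
              exact mul_le_mul_of_nonneg_left h.2 (by positivity)
          _ = (2 : ℝ)⁻¹ ^ n := mul_one _
    · intro x
      rw [hf x]
      refine tendsto_tsum_of_dominated_convergence hgeo (fun k => ?_)
        (Eventually.of_forall fun N k => ?_)
      · by_cases hk : (r k : ℝ) ≤ x
        · have : (fun N : ℕ => (2 : ℝ)⁻¹ ^ k * φ N k x) = fun _ => (2 : ℝ)⁻¹ ^ k := by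
            funext N
            have h1 : (1 : ℝ) ≤ (N + 1 : ℝ) * (x - (r k : ℝ)) + 1 := by nlinarith
            simp only [hφ]
            rw [min_eq_left h1, max_eq_right (by norm_num : (0:ℝ) ≤ 1), mul_one]
          rw [this, if_pos hk]
          exact tendsto_const_nhds
        · rw [if_neg hk]
          push_neg at hk
          obtain ⟨N0, hN0⟩ := exists_nat_ge (((r k : ℝ) - x)⁻¹)
          have hpos : (0 : ℝ) < (r k : ℝ) - x := by linarith
          refine Tendsto.congr' ?_ (tendsto_const_nhds (x := (0:ℝ)))
          filter_upwards [eventually_ge_atTop N0] with N hN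
          have h1 : (1 : ℝ) ≤ (N + 1 : ℝ) * ((r k : ℝ) - x) := by
            have : ((r k : ℝ) - x)⁻¹ ≤ (N + 1 : ℝ) := by
              have : (N0 : ℝ) ≤ (N : ℝ) := by exact_mod_cast hN
              linarith
            calc (1 : ℝ) = ((r k : ℝ) - x)⁻¹ * ((r k : ℝ) - x) :=
                  (inv_mul_cancel₀ (ne_of_gt hpos)).symm
              _ ≤ (N + 1 : ℝ) * ((r k : ℝ) - x) :=
                  mul_le_mul_of_nonneg_right this hpos.le
          have ht : (N + 1 : ℝ) * (x - (r k : ℝ)) + 1 ≤ 0 := by nlinarith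
          simp only [hφ]
          rw [min_eq_right (ht.trans (by norm_num)), max_eq_left ht, mul_zero]
      · have h := hφ01 N k x
        rw [Real.norm_eq_abs, abs_mul, abs_of_nonneg h.1,
          abs_of_nonneg (by positivity : (0:ℝ) ≤ (2 : ℝ)⁻¹ ^ k)]
        calc (2 : ℝ)⁻¹ ^ k * φ N k x ≤ (2 : ℝ)⁻¹ ^ k * 1 :=
              mul_le_mul_of_nonneg_left h.2 (by positivity)
          _ = (2 : ℝ)⁻¹ ^ k := mul_one _
  · -- discontinuity set
    ext x
    simp only [mem_setOf_eq, Set.mem_range]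
    constructor
    · -- not continuous → rational; contrapositive
      intro hnc
      by_contra hq
      push_neg at hq
      apply hnc
      rw [Metric.continuousAt_iff]
      intro ε hε
      obtain ⟨N, hN⟩ := exists_pow_lt_of_lt_one (half_pos hε)
        (by norm_num : (2 : ℝ)⁻¹ < 1)
      set T : Finset ℝ := insert (1 : ℝ)
        ((Finset.range N).image fun n => |x - (r n : ℝ)|) with hT
      have hTne : T.Nonempty := ⟨1, Finset.mem_insert_self _ _⟩
      set δ : ℝ := T.min' hTne with hδ
      have hδpos : 0 < δ := by
        rw [hδ]
        apply (Finset.lt_min'_iff T hTne).2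
        intro y hy
        rw [hT] at hy
        rcases Finset.mem_insert.1 hy with h | h
        · rw [h]; norm_num
        · obtain ⟨n, _, hn⟩ := Finset.mem_image.1 h
          rw [← hn]
          have : x ≠ (r n : ℝ) := fun h => hq (r n) h.symm
          exact abs_pos.2 (sub_ne_zero.2 this)
      have hδle : ∀ n < N, δ ≤ |x - (r n : ℝ)| := by
        intro n hn
        apply Finset.min'_le
        rw [hT]
        exact Finset.mem_insert_of_mem (Finset.mem_image.2 ⟨n, Finset.mem_range.2 hn, rfl⟩)
      refine ⟨δ, hδpos, fun {y} hy => ?_⟩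
      rw [Real.dist_eq] at hy ⊢
      have hay : ∀ n < N, a y n = a x n := by
        intro n hn
        have hd := hδle n hn
        simp only [ha]
        by_cases hc : (r n : ℝ) ≤ x
        · have hlt : (r n : ℝ) < x := lt_of_le_of_ne hc (fun h => hq (r n) h)
          have : |x - (r n : ℝ)| = x - (r n : ℝ) := abs_of_pos (by linarith)
          have hylt : (r n : ℝ) ≤ y := by
            have := abs_lt.1 hy
            linarith [this.1, this.2]
          rw [if_pos hylt, if_pos hc]
        · push_neg at hc
          have : |x - (r n : ℝ)| = (r n : ℝ) - x := by
            rw [abs_sub_comm]; exact abs_of_pos (by linarith)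
          have hylt : ¬ (r n : ℝ) ≤ y := by
            have := abs_lt.1 hy
            push_neg
            linarith [this.1, this.2]
          rw [if_neg hylt, if_neg (not_le.2 hc)]
      set c : ℕ → ℝ := fun n => if n < N then 0 else (2 : ℝ)⁻¹ ^ n with hc
      have hcle : ∀ n, c n ≤ (2 : ℝ)⁻¹ ^ n := by
        intro n; simp only [hc]; split
        · positivity
        · exact le_rfl
      have hcnn : ∀ n, 0 ≤ c n := by
        intro n; simp only [hc]; split <;> positivity
      have hcsum : Summable c := hgeo.of_nonneg_of_le hcnn hcle
      have hdle : ∀ n, |a y n - a x n| ≤ c n := by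
        intro n
        by_cases hn : n < N
        · rw [hay n hn, sub_self, abs_zero]
          simp only [hc, if_pos hn]; exact le_rfl
        · simp only [hc, if_neg hn]
          rw [abs_sub_le_iff]
          constructor
          · linarith [ha_le y n, ha_nonneg x n]
          · linarith [ha_le x n, ha_nonneg y n]
      have hdsum : Summable (fun n => a y n - a x n) := (hsum y).sub (hsum x)
      have key : |f y - f x| ≤ ∑' n, c n := by
        rw [hf y, hf x, ← Summable.tsum_sub (hsum y) (hsum x)]
        calc |∑' n, (a y n - a x n)| ≤ ∑' n, |a y n - a x n| := by
              have := norm_tsum_le_tsum_norm (f := fun n => a y n - a x n)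
                (hcsum.of_nonneg_of_le (fun n => abs_nonneg _) hdle)
              simpa using this
          _ ≤ ∑' n, c n := Summable.tsum_le_tsum hdle
              (hcsum.of_nonneg_of_le (fun n => abs_nonneg _) hdle) hcsum
      have hshift : Summable (fun i : ℕ => (2 : ℝ)⁻¹ ^ (i + N)) := by
        simpa using (summable_nat_add_iff N).2 hgeo
      have htail : ∑' n, c n ≤ (2 : ℝ)⁻¹ ^ N * 2 := by
        rw [← Summable.sum_add_tsum_nat_add N hcsum]
        have h1 : ∑ i ∈ Finset.range N, c i = 0 := by
          apply Finset.sum_eq_zero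
          intro i hi
          simp only [hc, if_pos (Finset.mem_range.1 hi)]
        rw [h1, zero_add]
        calc ∑' i, c (i + N) ≤ ∑' i : ℕ, (2 : ℝ)⁻¹ ^ (i + N) := by
              refine Summable.tsum_le_tsum (fun i => ?_)
                ((summable_nat_add_iff N).2 hcsum) hshift
              exact hcle _
          _ = ∑' i : ℕ, (2 : ℝ)⁻¹ ^ N * (2 : ℝ)⁻¹ ^ i := by
              congr 1; funext i; rw [pow_add]; ring
          _ = (2 : ℝ)⁻¹ ^ N * ∑' i : ℕ, (2 : ℝ)⁻¹ ^ i := tsum_mul_left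
          _ = (2 : ℝ)⁻¹ ^ N * 2 := by
              rw [tsum_geometric_of_lt_one (by norm_num) (by norm_num)]
              norm_num
      calc |f y - f x| ≤ ∑' n, c n := key
        _ ≤ (2 : ℝ)⁻¹ ^ N * 2 := htail
        _ < (ε / 2) * 2 := by linarith
        _ = ε := by ring
    · -- rational → not continuous
      rintro ⟨q, hq⟩ hcont
      obtain ⟨m, hm⟩ := hr.2 q
      have hxm : ((r m : ℚ) : ℝ) = x := by rw [hm]; exact hq
      have key : ∀ y, y < x → f y + (2 : ℝ)⁻¹ ^ m ≤ f x := by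
        intro y hy
        have ham : a x m - a y m = (2 : ℝ)⁻¹ ^ m := by
          simp only [ha]
          rw [if_pos (le_of_eq hxm), if_neg (by rw [hxm]; exact not_le.2 hy), sub_zero]
        have hle : a x m - a y m ≤ ∑' n, (a x n - a y n) :=
          Summable.le_tsum ((hsum x).sub (hsum y)) m
            (fun n _ => sub_nonneg.2 (hmono hy.le n))
        rw [ham] at hle
        rw [Summable.tsum_sub (hsum x) (hsum y), ← hf x, ← hf y] at hle
        linarith
      have hne : (𝓝[<] x).NeBot := inferInstance
      have htend : Tendsto f (𝓝[<] x) (𝓝 (f x)) :=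
        hcont.tendsto.mono_left nhdsWithin_le_nhds
      have hev : ∀ᶠ y in 𝓝[<] x, f y ≤ f x - (2 : ℝ)⁻¹ ^ m := by
        filter_upwards [self_mem_nhdsWithin] with y hy
        have := key y hy
        linarith
      have : f x ≤ f x - (2 : ℝ)⁻¹ ^ m := le_of_tendsto htend hev
      have : (0 : ℝ) < (2 : ℝ)⁻¹ ^ m := by positivity
      linarith
end
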